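/- arXiv:1801.05257 — 10 statements merged into one kernel-verified Lean document; each statement's English description precedes it below -/
import Mathlib

section
/- For every binary quartic f (homogeneous polynomial of degree 4 in ℂ[x,y]), the identity ⟨⟨f,f⟩_2, ⟨f,f⟩_2⟩_4 = 6·(⟨f,f⟩_4)^2 holds, where ⟨f,f⟩_2 is again a binary quartic and ⟨f,f⟩_4 and both sides of the identity are constants (degree-0 polynomials). This identity is the algebraic compatibility, on the space Sym^4(ℂ^2) of binary quartics, between the quadratic form V ↦ ⟨V,V⟩_4 and the symmetric cubic form V ↦ ⟨⟨V,V⟩_2, V⟩_4, which together define an SO(3)-structure. -/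
open MvPolynomial

/-- Partial derivative with respect to the first variable `x = X 0`. -/
noncomputable def dX : MvPolynomial (Fin 2) ℂ → MvPolynomial (Fin 2) ℂ :=
  fun f => MvPolynomial.pderiv (0 : Fin 2) f

/-- Partial derivative with respect to the second variable `y = X 1`. -/
noncomputable def dY : MvPolynomial (Fin 2) ℂ → MvPolynomial (Fin 2) ℂ :=
  fun f => MvPolynomial.pderiv (1 : Fin 2) f

/-- The `k`-th transvectant
`⟨φ,ψ⟩_k = Σ_{j=0}^{k} (−1)^j (k choose j) (∂^k φ/∂x^{k−j}∂y^j)·(∂^k ψ/∂x^j ∂y^{k−j})`. -/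
noncomputable def transvectant (k : ℕ) (φ ψ : MvPolynomial (Fin 2) ℂ) :
    MvPolynomial (Fin 2) ℂ :=
  ∑ j ∈ Finset.range (k + 1),
    ((-1 : ℂ) ^ j * (k.choose j : ℂ)) •
      (dX^[k - j] (dY^[j] φ) * dX^[j] (dY^[k - j] ψ))


/-!
Write a binary quartic as `f = ∑ aⱼ x^(4-j) y^j`. Since `∂ₓ^k ∂ᵧ^l (x^p y^q)` is an explicit multiple
of `x^(p-k) y^(q-l)`, the transvectants of `f` can be computed coefficientwise:
`⟨f,f⟩₄ = 96 (12 a₀a₄ - 3 a₁a₃ + a₂²)` is a multiple of the classical invariant `I`, and `⟨f,f⟩₂` is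
again a quartic whose coefficients are quadratic in the `aⱼ`. Feeding the latter into the former
turns the identity into a polynomial identity in `a₀, …, a₄`.
-/

theorem iterate_pderiv_monomial {R σ : Type*} [CommSemiring R] (i : σ) (k : ℕ) (s : σ →₀ ℕ)
    (a : R) :
    (pderiv i)^[k] (monomial s a) =
      monomial (s - Finsupp.single i k) (a * (s i).descFactorial k) := by
  induction k with
  | zero => simp
  | succ k ih =>
    rw [Function.iterate_succ_apply', ih, pderiv_monomial, tsub_tsub, ← Finsupp.single_add,
      Finsupp.tsub_apply, Finsupp.single_eq_same, Nat.descFactorial_succ, Nat.cast_mul, mul_assoc,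
      mul_comm ((s i - k : ℕ) : R)]

theorem C_mul_X_pow_mul_X_pow_eq_monomial {R σ : Type*} [CommSemiring R] (a : R) (i j : σ)
    (p q : ℕ) :
    (C a * X i ^ p * X j ^ q : MvPolynomial σ R) =
      monomial (Finsupp.single i p + Finsupp.single j q) a := by
  rw [X_pow_eq_monomial, X_pow_eq_monomial, C_apply, monomial_mul, monomial_mul, zero_add,
    mul_one, mul_one]

theorem single_zero_add_single_one_eq_iff {M : Type*} [AddZeroClass M] {p q : M}
    {m : Fin 2 →₀ M} :
    Finsupp.single 0 p + Finsupp.single 1 q = m ↔ p = m 0 ∧ q = m 1 := by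
  constructor
  · rintro rfl
    simp
  · rintro ⟨rfl, rfl⟩
    ext i
    fin_cases i <;> simp

theorem iterate_dX_add (k : ℕ) (f g : MvPolynomial (Fin 2) ℂ) :
    dX^[k] (f + g) = dX^[k] f + dX^[k] g :=
  iterate_map_add (pderiv 0) k f g

theorem iterate_dY_add (k : ℕ) (f g : MvPolynomial (Fin 2) ℂ) :
    dY^[k] (f + g) = dY^[k] f + dY^[k] g :=
  iterate_map_add (pderiv 1) k f g

theorem iterate_dX_iterate_dY_C_mul_X_pow_mul_X_pow (k l p q : ℕ) (a : ℂ) :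
    dX^[k] (dY^[l] (C a * X 0 ^ p * X 1 ^ q)) =
      C (a * p.descFactorial k * q.descFactorial l) * X 0 ^ (p - k) * X 1 ^ (q - l) := by
  show (pderiv 0)^[k] ((pderiv 1)^[l] _) = _
  simp only [C_mul_X_pow_mul_X_pow_eq_monomial, iterate_pderiv_monomial]
  refine congrArg₂ (fun s c => monomial s c) ?_ ?_
  · ext i
    fin_cases i <;> simp
  · simp [mul_right_comm]

noncomputable def quartic (a : Fin 5 → ℂ) : MvPolynomial (Fin 2) ℂ :=
  ∑ j : Fin 5, C (a j) * X 0 ^ (4 - (j : ℕ)) * X 1 ^ (j : ℕ)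

theorem MvPolynomial.IsHomogeneous.exists_eq_quartic {f : MvPolynomial (Fin 2) ℂ}
    (hf : f.IsHomogeneous 4) : ∃ a : Fin 5 → ℂ, f = quartic a := by
  refine ⟨fun j => coeff (Finsupp.single 0 (4 - (j : ℕ)) + Finsupp.single 1 (j : ℕ)) f, ?_⟩
  ext m
  simp only [quartic, coeff_sum, C_mul_X_pow_mul_X_pow_eq_monomial, coeff_monomial]
  by_cases hm : m 0 + m 1 = 4
  · have hexp : Finsupp.single 0 (4 - m 1) + Finsupp.single 1 (m 1) = m :=
      single_zero_add_single_one_eq_iff.2 ⟨by omega, rfl⟩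
    rw [Finset.sum_eq_single_of_mem ⟨m 1, by omega⟩ (Finset.mem_univ _)]
    · exact ((if_pos hexp).trans (congrArg (coeff · f) hexp)).symm
    · intro j _ hj
      rw [if_neg]
      intro h
      exact hj (Fin.ext (single_zero_add_single_one_eq_iff.1 h).2)
  · rw [hf.coeff_eq_zero (by rwa [Finsupp.degree_eq_sum, Fin.sum_univ_two]), Finset.sum_eq_zero]
    intro j _
    exact if_neg (by rw [single_zero_add_single_one_eq_iff]; omega)

theorem transvectant_two_quartic (a : Fin 5 → ℂ) :
    transvectant 2 (quartic a) (quartic a) =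
      quartic ![48 * a 0 * a 2 - 18 * a 1 ^ 2, 144 * a 0 * a 3 - 24 * a 1 * a 2,
        288 * a 0 * a 4 + 36 * a 1 * a 3 - 24 * a 2 ^ 2, 144 * a 1 * a 4 - 24 * a 2 * a 3,
        48 * a 2 * a 4 - 18 * a 3 ^ 2] := by
  simp only [transvectant, quartic, Fin.sum_univ_five, Finset.sum_range_succ,
    Finset.sum_range_zero, iterate_dX_add, iterate_dY_add,
    iterate_dX_iterate_dY_C_mul_X_pow_mul_X_pow, Matrix.cons_val]
  norm_num [smul_eq_C_mul, Nat.choose, map_ofNat]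
  ring

theorem transvectant_four_quartic (a : Fin 5 → ℂ) :
    transvectant 4 (quartic a) (quartic a) =
      C (1152 * a 0 * a 4 - 288 * a 1 * a 3 + 96 * a 2 ^ 2) := by
  simp only [transvectant, quartic, Fin.sum_univ_five, Finset.sum_range_succ,
    Finset.sum_range_zero, iterate_dX_add, iterate_dY_add,
    iterate_dX_iterate_dY_C_mul_X_pow_mul_X_pow]
  norm_num [smul_eq_C_mul, Nat.choose, map_ofNat]
  ring

/-- For every binary quartic `f`, the identity
`⟨⟨f,f⟩_2, ⟨f,f⟩_2⟩_4 = 6·(⟨f,f⟩_4)^2` holds: the algebraic compatibility between the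
quadratic form `V ↦ ⟨V,V⟩_4` and the cubic form `V ↦ ⟨⟨V,V⟩_2, V⟩_4` of the SO(3)-structure. -/
theorem quartic_so3_identity (f : MvPolynomial (Fin 2) ℂ) (hf : f.IsHomogeneous 4) :
    transvectant 4 (transvectant 2 f f) (transvectant 2 f f)
      = (6 : ℂ) • (transvectant 4 f f) ^ 2 := by
  obtain ⟨a, rfl⟩ := hf.exists_eq_quartic
  rw [transvectant_two_quartic, transvectant_four_quartic, transvectant_four_quartic,
    smul_eq_C_mul, ← C_pow, ← C_mul]
  congr 1
  simp only [Matrix.cons_val]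
  ring
end

section
/- Let V be a 5-dimensional real inner product space with orthonormal basis e_1,…,e_5, and let G : V × V × V → ℝ be a symmetric trilinear form satisfying (i) Σ_{i=1}^{5} G(e_i, e_i, v) = 0 for all v ∈ V (G is trace-free) and (ii) 6·Σ_{i=1}^{5} G(e_i, v, v)^2 = ⟨v,v⟩^2 for all v ∈ V. Then Σ_{i,j=1}^{5} G(e_i, e_j, v)·G(e_i, e_j, w) = (7/12)·⟨v,w⟩ for all v, w ∈ V, and Σ_{i,j,k=1}^{5} G(e_i, e_j, e_k)^2 = 35/12. -/
open RealInnerProductSpace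

/-!
Polarizing the quartic identity `c · Σ_i β_i(v,v)² = ⟪v,v⟫²` twice gives
`c · (Σ_i β_i(v,v) β_i(w,u) + 2 Σ_i β_i(v,w) β_i(v,u)) = ⟪v,v⟫⟪w,u⟫ + 2⟪v,w⟫⟪v,u⟫`.
Taking `β_i = G(e_i)` and tracing over `v = e_j`, the first sum vanishes because `G` is
trace-free, and the identity becomes `2c · Σ_{i,j} G(e_i,e_j,w) G(e_i,e_j,u) = (n + 2)⟪w,u⟫`
with `n = 5`, `c = 6`. A further trace over `w = u = e_k` gives the squared norm of `G`.
-/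

section Polarization

variable {V : Type*} [NormedAddCommGroup V] [InnerProductSpace ℝ V] {ι : Type*} [Fintype ι]
  {β : ι → V →ₗ[ℝ] V →ₗ[ℝ] ℝ} {c : ℝ}

theorem sum_sq_bilin_polarization_partial (hβ : ∀ i x y, β i x y = β i y x)
    (h : ∀ v, c * ∑ i, β i v v ^ 2 = ⟪v, v⟫ ^ 2) (v x : V) :
    c * (∑ i, β i v v * β i x x + 2 * ∑ i, β i v x ^ 2) = ⟪v, v⟫ * ⟪x, x⟫ + 2 * ⟪v, x⟫ ^ 2 := by
  have key : ∑ i, β i (v + x) (v + x) ^ 2 + ∑ i, β i (v - x) (v - x) ^ 2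
      - 2 * ∑ i, β i v v ^ 2 - 2 * ∑ i, β i x x ^ 2
      = 4 * (∑ i, β i v v * β i x x + 2 * ∑ i, β i v x ^ 2) := by
    simp only [Finset.mul_sum, ← Finset.sum_add_distrib, ← Finset.sum_sub_distrib]
    refine Finset.sum_congr rfl fun i _ => ?_
    simp only [map_add, map_sub, LinearMap.add_apply, LinearMap.sub_apply, hβ i x v]
    ring
  have hadd := h (v + x)
  have hsub := h (v - x)
  rw [real_inner_add_add_self] at hadd
  rw [real_inner_sub_sub_self] at hsub
  linear_combination (hadd + hsub - 2 * h v - 2 * h x - c * key) / 4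

theorem sum_sq_bilin_polarization (hβ : ∀ i x y, β i x y = β i y x)
    (h : ∀ v, c * ∑ i, β i v v ^ 2 = ⟪v, v⟫ ^ 2) (v w u : V) :
    c * (∑ i, β i v v * β i w u + 2 * ∑ i, β i v w * β i v u)
      = ⟪v, v⟫ * ⟪w, u⟫ + 2 * (⟪v, w⟫ * ⟪v, u⟫) := by
  have key : (∑ i, β i v v * β i (w + u) (w + u) + 2 * ∑ i, β i v (w + u) ^ 2)
      - (∑ i, β i v v * β i w w + 2 * ∑ i, β i v w ^ 2)
      - (∑ i, β i v v * β i u u + 2 * ∑ i, β i v u ^ 2)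
      = 2 * (∑ i, β i v v * β i w u + 2 * ∑ i, β i v w * β i v u) := by
    simp only [Finset.mul_sum, ← Finset.sum_add_distrib, ← Finset.sum_sub_distrib]
    refine Finset.sum_congr rfl fun i _ => ?_
    simp only [map_add, LinearMap.add_apply, hβ i u w]
    ring
  have hwu := sum_sq_bilin_polarization_partial hβ h v (w + u)
  rw [inner_add_left, inner_add_right, inner_add_right, inner_add_right,
    real_inner_comm w u] at hwu
  linear_combination (hwu - sum_sq_bilin_polarization_partial hβ h v w
    - sum_sq_bilin_polarization_partial hβ h v u - c * key) / 2

end Polarization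

section Trace

variable {V : Type*} [NormedAddCommGroup V] [InnerProductSpace ℝ V] {ι : Type*} [Fintype ι]
  (e : OrthonormalBasis ι ℝ V) {G : V →ₗ[ℝ] V →ₗ[ℝ] V →ₗ[ℝ] ℝ}

theorem OrthonormalBasis.sum_inner_self :
    ∑ j, ⟪e j, e j⟫ = Fintype.card ι := by
  simp [e.orthonormal.1]

theorem two_mul_sum_sum_contraction_eq
    (hsymm₁ : ∀ u v w : V, G u v w = G v u w) (hsymm₂ : ∀ u v w : V, G u v w = G u w v)
    (htracefree : ∀ v : V, ∑ i, G (e i) (e i) v = 0) {c : ℝ}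
    (hpol : ∀ v w u : V, c * (∑ i, G (e i) v v * G (e i) w u + 2 * ∑ i, G (e i) v w * G (e i) v u)
      = ⟪v, v⟫ * ⟪w, u⟫ + 2 * (⟪v, w⟫ * ⟪v, u⟫)) (w u : V) :
    2 * c * ∑ i, ∑ j, G (e i) (e j) w * G (e i) (e j) u = (Fintype.card ι + 2) * ⟪w, u⟫ := by
  have htrace₂₃ : ∀ i, ∑ j, G (e i) (e j) (e j) = 0 := fun i => by
    simpa only [hsymm₁ (e i), hsymm₂ (e _) (e i)] using htracefree (e i)
  have htrace : ∑ j, ∑ i, G (e i) (e j) (e j) * G (e i) w u = 0 := by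
    rw [Finset.sum_comm]
    simp only [← Finset.sum_mul, htrace₂₃, zero_mul, Finset.sum_const_zero]
  have hsum := Finset.sum_congr rfl fun j (_ : j ∈ Finset.univ) => hpol (e j) w u
  simp only [← Finset.mul_sum, Finset.sum_add_distrib, ← Finset.sum_mul, htrace,
    real_inner_comm w (e _), e.sum_inner_mul_inner, e.sum_inner_self] at hsum
  rw [Finset.sum_comm]
  linear_combination hsum

theorem sum_sum_sum_sq_eq {a : ℝ}
    (h : ∀ w u : V, ∑ i, ∑ j, G (e i) (e j) w * G (e i) (e j) u = a * ⟪w, u⟫) :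
    ∑ i, ∑ j, ∑ k, G (e i) (e j) (e k) ^ 2 = a * Fintype.card ι := by
  calc ∑ i, ∑ j, ∑ k, G (e i) (e j) (e k) ^ 2
      = ∑ i, ∑ k, ∑ j, G (e i) (e j) (e k) * G (e i) (e j) (e k) := by
        simp only [sq]
        exact Finset.sum_congr rfl fun _ _ => Finset.sum_comm
    _ = ∑ k, ∑ i, ∑ j, G (e i) (e j) (e k) * G (e i) (e j) (e k) := Finset.sum_comm
    _ = a * Fintype.card ι := by simp only [h, ← Finset.mul_sum, e.sum_inner_self]

end Trace

theorem so3_structure_traces_general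
    {V : Type*} [NormedAddCommGroup V] [InnerProductSpace ℝ V]
    (e : OrthonormalBasis (Fin 5) ℝ V)
    (G : V →ₗ[ℝ] V →ₗ[ℝ] V →ₗ[ℝ] ℝ)
    (hsymm₁ : ∀ u v w : V, G u v w = G v u w)
    (hsymm₂ : ∀ u v w : V, G u v w = G u w v)
    (htracefree : ∀ v : V, ∑ i : Fin 5, G (e i) (e i) v = 0)
    (hcubic : ∀ v : V, 6 * ∑ i : Fin 5, (G (e i) v v) ^ 2 = ⟪v, v⟫ ^ 2) :
    (∀ v w : V, ∑ i : Fin 5, ∑ j : Fin 5,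
        G (e i) (e j) v * G (e i) (e j) w = (7 / 12) * ⟪v, w⟫) ∧
    (∑ i : Fin 5, ∑ j : Fin 5, ∑ k : Fin 5, (G (e i) (e j) (e k)) ^ 2 = 35 / 12) := by
  have hcontr : ∀ v w : V, ∑ i : Fin 5, ∑ j : Fin 5,
      G (e i) (e j) v * G (e i) (e j) w = (7 / 12) * ⟪v, w⟫ := fun v w => by
    have h := two_mul_sum_sum_contraction_eq e hsymm₁ hsymm₂ htracefree
      (sum_sq_bilin_polarization (fun i => hsymm₂ (e i)) hcubic) v w
    rw [Fintype.card_fin] at h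
    linear_combination h / 12
  refine ⟨hcontr, ?_⟩
  rw [sum_sum_sum_sq_eq e hcontr, Fintype.card_fin]
  norm_num

/-- Let `V` be a 5-dimensional real inner product space with orthonormal basis `e`, and let
`G` be a symmetric trilinear form which is trace-free and satisfies
`6·Σ_i G(e_i,v,v)^2 = ⟨v,v⟩^2`.  Then `Σ_{i,j} G(e_i,e_j,v)·G(e_i,e_j,w) = (7/12)·⟨v,w⟩`
and `Σ_{i,j,k} G(e_i,e_j,e_k)^2 = 35/12`. -/
theorem so3_structure_traces
    {V : Type*} [NormedAddCommGroup V] [InnerProductSpace ℝ V]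
    (hdim : Module.finrank ℝ V = 5)
    (e : OrthonormalBasis (Fin 5) ℝ V)
    (G : V →ₗ[ℝ] V →ₗ[ℝ] V →ₗ[ℝ] ℝ)
    (hsymm₁ : ∀ u v w : V, G u v w = G v u w)
    (hsymm₂ : ∀ u v w : V, G u v w = G u w v)
    (htracefree : ∀ v : V, ∑ i : Fin 5, G (e i) (e i) v = 0)
    (hcubic : ∀ v : V, 6 * ∑ i : Fin 5, (G (e i) v v) ^ 2 = ⟪v, v⟫ ^ 2) :
    (∀ v w : V, ∑ i : Fin 5, ∑ j : Fin 5,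
        G (e i) (e j) v * G (e i) (e j) w = (7 / 12) * ⟪v, w⟫) ∧
    (∑ i : Fin 5, ∑ j : Fin 5, ∑ k : Fin 5, (G (e i) (e j) (e k)) ^ 2 = 35 / 12) :=
  so3_structure_traces_general e G hsymm₁ hsymm₂ htracefree hcubic
end

section
/- Let I ⊆ ℝ be an open interval and let y : I → ℝ be five times differentiable with y''(x) > 0 for all x ∈ I. Then y satisfies the fifth-order ODE y⁽⁵⁾(x)·(y''(x))^2 = −(40/9)·(y'''(x))^3 + 5·y''(x)·y'''(x)·y''''(x) on I if and only if the graph of y lies on a conic: there exist real numbers (c_1, c_2, c_3, c_4, c_5, c_6), not all zero, such that c_1·y(x)^2 + c_2·x·y(x) + c_3·x^2 + c_4·y(x) + c_5·x + c_6 = 0 for all x ∈ I. -/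
/-!
Write `Q(x, y) = c₀y² + c₁xy + c₂x² + c₃y + c₄x + c₅` and `Pₙ` for the `n`-th derivative of
`x ↦ Q(x, y x)`. With `q, r, s` the second to fourth derivatives of `y`, the identity
`9q²P₅ = (15qs - 40r²)P₃ + 30qrP₄ + 9 Q_y · (q²y⁽⁵⁾ + (40/9)r³ - 5qrs)` drives both directions.

If the graph lies on the conic, all `Pₙ` vanish, and `Q_y` cannot vanish at a point (together
with `P₀ = ⋯ = P₄ = 0` and `q ≠ 0` that forces `c = 0`), so `y` solves the ODE.
Conversely, five linear conditions on six coefficients give `c ≠ 0` with `P₀, …, P₄` vanishing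
at one point `x₀`. Along a solution of the ODE the identity says that `(P₃, P₄)` solves a linear
second-order system, so it vanishes identically by uniqueness for linear ODEs, and integrating
`P₂, P₁, P₀` from `x₀` shows that they vanish as well.
-/

open Set Filter Topology

section LinearODE

variable {E : Type*} [NormedAddCommGroup E] [NormedSpace ℝ E] {I : Set ℝ}

theorem IsOpen.exists_Icc_subset_of_mem (hI : IsOpen I) (hIc : I.OrdConnected)
    {x y : ℝ} (hx : x ∈ I) (hy : y ∈ I) :
    ∃ a b, x ∈ Ioo a b ∧ y ∈ Ioo a b ∧ Icc a b ⊆ I := by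
  obtain ⟨a, ha, haI⟩ := Eventually.exists_lt (hI.mem_nhds (min_rec' (· ∈ I) hx hy))
  obtain ⟨b, hb, hbI⟩ := Eventually.exists_gt (hI.mem_nhds (max_rec' (· ∈ I) hx hy))
  exact ⟨a, b, ⟨by grind, by grind⟩, ⟨by grind, by grind⟩, hIc.out haI hbI⟩

theorem eqOn_zero_of_hasDerivAt_linear (hI : IsOpen I) (hIc : I.OrdConnected)
    {A : ℝ → E →L[ℝ] E} (hA : ContinuousOn A I) {u : ℝ → E}
    (hu : ∀ t ∈ I, HasDerivAt u (A t (u t)) t)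
    {t₀ : ℝ} (ht₀ : t₀ ∈ I) (hu₀ : u t₀ = 0) : EqOn u 0 I := by
  intro t ht
  obtain ⟨a, b, ht₀ab, htab, hab⟩ := hI.exists_Icc_subset_of_mem hIc ht₀ ht
  obtain ⟨C, hC⟩ := isCompact_Icc.exists_bound_of_continuousOn (hA.mono hab)
  have hlip : ∀ s ∈ Ioo a b, LipschitzOnWith C.toNNReal (A s) univ := fun s hs =>
    ((A s).lipschitz.weaken
      (NNReal.le_toNNReal_of_coe_le (hC s (Ioo_subset_Icc_self hs)))).lipschitzOnWith
  exact ODE_solution_unique_of_mem_Ioo hlip ht₀ab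
    (fun s hs => ⟨hu s (hab (Ioo_subset_Icc_self hs)), mem_univ _⟩)
    (fun s _ => ⟨by simp, mem_univ _⟩) hu₀ htab

theorem eqOn_zero_of_hasDerivAt_linear_second_order (hI : IsOpen I)
    (hIc : I.OrdConnected) {a b u v : ℝ → ℝ} (ha : ContinuousOn a I) (hb : ContinuousOn b I)
    (hu : ∀ t ∈ I, HasDerivAt u (v t) t) (hv : ∀ t ∈ I, HasDerivAt v (a t * u t + b t * v t) t)
    {t₀ : ℝ} (ht₀ : t₀ ∈ I) (hu₀ : u t₀ = 0) (hv₀ : v t₀ = 0) :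
    EqOn u 0 I ∧ EqOn v 0 I := by
  let A : ℝ → (ℝ × ℝ) →L[ℝ] ℝ × ℝ := fun t =>
    (ContinuousLinearMap.inl ℝ ℝ ℝ).comp (.snd ℝ ℝ ℝ) +
      a t • (ContinuousLinearMap.inr ℝ ℝ ℝ).comp (.fst ℝ ℝ ℝ) +
      b t • (ContinuousLinearMap.inr ℝ ℝ ℝ).comp (.snd ℝ ℝ ℝ)
  have hA : ContinuousOn A I := by fun_prop
  have h := eqOn_zero_of_hasDerivAt_linear hI hIc hA (u := fun t => (u t, v t))
    (fun t ht => by simpa [A] using (hu t ht).prodMk (hv t ht)) ht₀ (by simp [hu₀, hv₀])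
  exact ⟨fun t ht => congrArg Prod.fst (h ht), fun t ht => congrArg Prod.snd (h ht)⟩

theorem hasDerivAt_eqOn_zero_of_eqOn_zero (hI : IsOpen I) {f f' : ℝ → E}
    (hf : ∀ x ∈ I, HasDerivAt f (f' x) x) (h0 : EqOn f 0 I) : EqOn f' 0 I := fun x hx =>
  (hf x hx).unique ((hasDerivAt_const x 0).congr_of_eventuallyEq
    (eventually_of_mem (hI.mem_nhds hx) h0))

theorem eqOn_zero_of_hasDerivAt_eqOn_zero (hI : IsOpen I) (hIc : IsPreconnected I)
    {f f' : ℝ → E} (hf : ∀ x ∈ I, HasDerivAt f (f' x) x) (hf' : EqOn f' 0 I)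
    {x₀ : ℝ} (hx₀ : x₀ ∈ I) (h0 : f x₀ = 0) : EqOn f 0 I :=
  hI.eqOn_of_deriv_eq hIc (fun x hx => (hf x hx).differentiableAt.differentiableWithinAt)
    (differentiableOn_const 0) (fun x hx => by simp [(hf x hx).deriv, hf' hx]) hx₀ h0

end LinearODE

def conicPartialY (c : Fin 6 → ℝ) (y : ℝ → ℝ) (x : ℝ) : ℝ :=
  2 * c 0 * y x + c 1 * x + c 3

/-- The `n`-th derivative of `x ↦ Q(x, y x)`, expanded in the derivatives of `y`
(`hasDerivAt_conicDeriv`); meaningful only for `n ≤ 5`. -/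
noncomputable def conicDeriv (c : Fin 6 → ℝ) (y : ℝ → ℝ) : ℕ → ℝ → ℝ
  | 0 => fun x => c 0 * y x ^ 2 + c 1 * x * y x + c 2 * x ^ 2 + c 3 * y x + c 4 * x + c 5
  | 1 => fun x => conicPartialY c y x * iteratedDeriv 1 y x + (c 1 * y x + 2 * c 2 * x + c 4)
  | 2 => fun x => conicPartialY c y x * iteratedDeriv 2 y x +
      2 * (c 0 * iteratedDeriv 1 y x ^ 2 + c 1 * iteratedDeriv 1 y x + c 2)
  | 3 => fun x => conicPartialY c y x * iteratedDeriv 3 y x +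
      3 * (2 * c 0 * iteratedDeriv 1 y x + c 1) * iteratedDeriv 2 y x
  | 4 => fun x => conicPartialY c y x * iteratedDeriv 4 y x +
      4 * (2 * c 0 * iteratedDeriv 1 y x + c 1) * iteratedDeriv 3 y x +
      6 * c 0 * iteratedDeriv 2 y x ^ 2
  | 5 => fun x => conicPartialY c y x * iteratedDeriv 5 y x +
      5 * (2 * c 0 * iteratedDeriv 1 y x + c 1) * iteratedDeriv 4 y x +
      20 * c 0 * iteratedDeriv 2 y x * iteratedDeriv 3 y x
  | _ + 6 => 0

theorem hasDerivAt_conicDeriv (c : Fin 6 → ℝ) {y : ℝ → ℝ} {x : ℝ} {n : ℕ} (hn : n < 5)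
    (hdy : ∀ k ≤ n, DifferentiableAt ℝ (iteratedDeriv k y) x) :
    HasDerivAt (conicDeriv c y n) (conicDeriv c y (n + 1) x) x := by
  have hy (k : ℕ) (hk : k ≤ n) : HasDerivAt (iteratedDeriv k y) (iteratedDeriv (k + 1) y x) x := by
    simpa only [iteratedDeriv_succ] using (hdy k hk).hasDerivAt
  have h0 : HasDerivAt y (iteratedDeriv 1 y x) x := by simpa using hy 0 (Nat.zero_le _)
  have hx : HasDerivAt (fun t : ℝ => t) 1 x := hasDerivAt_id' x
  have hA : HasDerivAt (conicPartialY c y) (2 * c 0 * iteratedDeriv 1 y x + c 1) x :=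
    (((h0.const_mul (2 * c 0)).fun_add (hx.const_mul (c 1))).add_const (c 3)).congr_deriv
      (by ring)
  have hB (h1 : HasDerivAt (iteratedDeriv 1 y) (iteratedDeriv 2 y x) x) :
      HasDerivAt (fun t => 2 * c 0 * iteratedDeriv 1 y t + c 1) (2 * c 0 * iteratedDeriv 2 y x) x :=
    (h1.const_mul (2 * c 0)).add_const (c 1)
  interval_cases n <;> simp only [conicDeriv]
  · exact ((((((h0.fun_pow 2).const_mul (c 0)).fun_add ((hx.const_mul (c 1)).fun_mul h0)).fun_add
      ((hx.fun_pow 2).const_mul (c 2))).fun_add (h0.const_mul (c 3))).fun_add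
      (hx.const_mul (c 4))).add_const (c 5) |>.congr_deriv (by simp only [conicPartialY]; ring)
  · exact ((hA.fun_mul (hy 1 le_rfl)).fun_add (((h0.const_mul (c 1)).fun_add
      (hx.const_mul (2 * c 2))).add_const (c 4))).congr_deriv (by simp only [conicPartialY]; ring)
  · have h1 := hy 1 (by norm_num)
    exact ((hA.fun_mul (hy 2 le_rfl)).fun_add (((((h1.fun_pow 2).const_mul (c 0)).fun_add
      (h1.const_mul (c 1))).add_const (c 2)).const_mul 2)).congr_deriv (by ring)
  · exact ((hA.fun_mul (hy 3 le_rfl)).fun_add (((hB (hy 1 (by norm_num))).const_mul 3).fun_mul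
      (hy 2 (by norm_num)))).congr_deriv (by ring)
  · exact ((hA.fun_mul (hy 4 le_rfl)).fun_add (((hB (hy 1 (by norm_num))).const_mul 4).fun_mul
      (hy 3 (by norm_num)))).fun_add (((hy 2 (by norm_num)).fun_pow 2).const_mul (6 * c 0))
      |>.congr_deriv (by ring)

theorem conicDeriv_add (c c' : Fin 6 → ℝ) (y : ℝ → ℝ) (n : ℕ) (x : ℝ) :
    conicDeriv (c + c') y n x = conicDeriv c y n x + conicDeriv c' y n x := by
  rcases n with _ | _ | _ | _ | _ | _ | n <;>
    simp only [conicDeriv, conicPartialY, Pi.add_apply, Pi.zero_apply] <;> ring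

theorem conicDeriv_smul (r : ℝ) (c : Fin 6 → ℝ) (y : ℝ → ℝ) (n : ℕ) (x : ℝ) :
    conicDeriv (r • c) y n x = r * conicDeriv c y n x := by
  rcases n with _ | _ | _ | _ | _ | _ | n <;>
    simp only [conicDeriv, conicPartialY, Pi.smul_apply, smul_eq_mul, Pi.zero_apply] <;> ring

theorem exists_ne_zero_conicDeriv_eq_zero (y : ℝ → ℝ) (x : ℝ) :
    ∃ c ≠ 0, ∀ n < 5, conicDeriv c y n x = 0 := by
  let L : (Fin 6 → ℝ) →ₗ[ℝ] Fin 5 → ℝ :=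
    { toFun := fun c n => conicDeriv c y n x
      map_add' := fun c c' => funext fun n => conicDeriv_add c c' y n x
      map_smul' := fun r c => funext fun n => conicDeriv_smul r c y n x }
  obtain ⟨c, hc, hc0⟩ := Submodule.exists_mem_ne_zero_of_ne_bot
    (L.ker_ne_bot_of_finrank_lt (by simp))
  exact ⟨c, hc0, fun n hn => congrFun hc ⟨n, hn⟩⟩

theorem conicDeriv_five_identity (c : Fin 6 → ℝ) (y : ℝ → ℝ) (x : ℝ) :
    9 * iteratedDeriv 2 y x ^ 2 * conicDeriv c y 5 x =
      (15 * iteratedDeriv 2 y x * iteratedDeriv 4 y x - 40 * iteratedDeriv 3 y x ^ 2) *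
          conicDeriv c y 3 x +
        30 * iteratedDeriv 2 y x * iteratedDeriv 3 y x * conicDeriv c y 4 x +
        9 * conicPartialY c y x *
          (iteratedDeriv 5 y x * iteratedDeriv 2 y x ^ 2 -
            (-(40 / 9) * iteratedDeriv 3 y x ^ 3 +
              5 * iteratedDeriv 2 y x * iteratedDeriv 3 y x * iteratedDeriv 4 y x)) := by
  simp only [conicDeriv]; ring

theorem eq_zero_of_conicPartialY_eq_zero {c : Fin 6 → ℝ} {y : ℝ → ℝ} {x : ℝ}
    (hA : conicPartialY c y x = 0) (hq : iteratedDeriv 2 y x ≠ 0)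
    (hP : ∀ n < 5, conicDeriv c y n x = 0) : c = 0 := by
  have h0 := hP 0 (by norm_num)
  have h1 := hP 1 (by norm_num)
  have h2 := hP 2 (by norm_num)
  have h3 := hP 3 (by norm_num)
  have h4 := hP 4 (by norm_num)
  simp only [conicDeriv, hA] at h0 h1 h2 h3 h4
  rw [conicPartialY] at hA
  have hB : 2 * c 0 * iteratedDeriv 1 y x + c 1 = 0 :=
    (mul_eq_zero.1 (by linear_combination h3 / 3 : _ * iteratedDeriv 2 y x = 0)).resolve_right hq
  have hc0 : c 0 = 0 :=
    (mul_eq_zero.1 (by linear_combination (h4 - 4 * iteratedDeriv 3 y x * hB) / 6 :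
      c 0 * iteratedDeriv 2 y x ^ 2 = 0)).resolve_right (pow_ne_zero 2 hq)
  have hc1 : c 1 = 0 := by linear_combination hB - 2 * iteratedDeriv 1 y x * hc0
  have hc2 : c 2 = 0 := by
    linear_combination h2 / 2 - iteratedDeriv 1 y x ^ 2 * hc0 - iteratedDeriv 1 y x * hc1
  have hc3 : c 3 = 0 := by linear_combination hA - 2 * y x * hc0 - x * hc1
  have hc4 : c 4 = 0 := by linear_combination h1 - y x * hc1 - 2 * x * hc2
  have hc5 : c 5 = 0 := by
    linear_combination h0 - y x ^ 2 * hc0 - x * y x * hc1 - x ^ 2 * hc2 - y x * hc3 - x * hc4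
  ext i
  fin_cases i <;> assumption

theorem ode_of_conicDeriv_eq_zero {c : Fin 6 → ℝ} (hc : c ≠ 0) {y : ℝ → ℝ} {x : ℝ}
    (hq : iteratedDeriv 2 y x ≠ 0) (hP : ∀ n ≤ 5, conicDeriv c y n x = 0) :
    iteratedDeriv 5 y x * iteratedDeriv 2 y x ^ 2 =
      -(40 / 9) * iteratedDeriv 3 y x ^ 3 +
        5 * iteratedDeriv 2 y x * iteratedDeriv 3 y x * iteratedDeriv 4 y x := by
  have hA : conicPartialY c y x ≠ 0 := fun hA =>
    hc (eq_zero_of_conicPartialY_eq_zero hA hq fun n hn => hP n hn.le)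
  have h := conicDeriv_five_identity c y x
  rw [hP 3 (by norm_num), hP 4 (by norm_num), hP 5 le_rfl] at h
  have h' : conicPartialY c y x * (iteratedDeriv 5 y x * iteratedDeriv 2 y x ^ 2 -
      (-(40 / 9) * iteratedDeriv 3 y x ^ 3 +
        5 * iteratedDeriv 2 y x * iteratedDeriv 3 y x * iteratedDeriv 4 y x)) = 0 := by
    linear_combination -h / 9
  linear_combination (mul_eq_zero.1 h').resolve_left hA

theorem conicDeriv_five_eq_of_ode (c : Fin 6 → ℝ) {y : ℝ → ℝ} {x : ℝ}
    (hq : iteratedDeriv 2 y x ≠ 0)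
    (hode : iteratedDeriv 5 y x * iteratedDeriv 2 y x ^ 2 =
      -(40 / 9) * iteratedDeriv 3 y x ^ 3 +
        5 * iteratedDeriv 2 y x * iteratedDeriv 3 y x * iteratedDeriv 4 y x) :
    conicDeriv c y 5 x =
      (15 * iteratedDeriv 2 y x * iteratedDeriv 4 y x - 40 * iteratedDeriv 3 y x ^ 2) /
          (9 * iteratedDeriv 2 y x ^ 2) * conicDeriv c y 3 x +
        10 * iteratedDeriv 3 y x / (3 * iteratedDeriv 2 y x) * conicDeriv c y 4 x := by
  have h := conicDeriv_five_identity c y x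
  field_simp
  linear_combination 3 * h + 27 * conicPartialY c y x * hode

variable {I : Set ℝ} {y : ℝ → ℝ} {c : Fin 6 → ℝ}

theorem conicDeriv_eqOn_zero_of_eqOn_zero (hI : IsOpen I)
    (hy : ∀ k < 5, ∀ x ∈ I, DifferentiableAt ℝ (iteratedDeriv k y) x)
    (h0 : EqOn (conicDeriv c y 0) 0 I) {n : ℕ} (hn : n ≤ 5) : EqOn (conicDeriv c y n) 0 I := by
  induction n with
  | zero => exact h0
  | succ n ih =>
    exact hasDerivAt_eqOn_zero_of_eqOn_zero hI
      (fun x hx => hasDerivAt_conicDeriv c (by omega) fun k hk => hy k (by omega) x hx)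
      (ih (by omega))

theorem conicDeriv_zero_eqOn_zero_of_ode (hI : IsOpen I) (hIc : I.OrdConnected)
    (hy : ∀ k < 5, ∀ x ∈ I, DifferentiableAt ℝ (iteratedDeriv k y) x)
    (hq : ∀ x ∈ I, iteratedDeriv 2 y x ≠ 0)
    (hode : ∀ x ∈ I, iteratedDeriv 5 y x * iteratedDeriv 2 y x ^ 2 =
      -(40 / 9) * iteratedDeriv 3 y x ^ 3 +
        5 * iteratedDeriv 2 y x * iteratedDeriv 3 y x * iteratedDeriv 4 y x)
    {x₀ : ℝ} (hx₀ : x₀ ∈ I) (hc₀ : ∀ n < 5, conicDeriv c y n x₀ = 0) :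
    EqOn (conicDeriv c y 0) 0 I := by
  have hP (n : ℕ) (hn : n < 5) (x : ℝ) (hx : x ∈ I) :
      HasDerivAt (conicDeriv c y n) (conicDeriv c y (n + 1) x) x :=
    hasDerivAt_conicDeriv c hn fun k hk => hy k (by omega) x hx
  have hcont (k : ℕ) (hk : k < 5) : ContinuousOn (iteratedDeriv k y) I :=
    continuousOn_of_forall_continuousAt fun x hx => (hy k hk x hx).continuousAt
  have hd2 := hcont 2 (by norm_num)
  have hd3 := hcont 3 (by norm_num)
  have hd4 := hcont 4 (by norm_num)
  have h34 := eqOn_zero_of_hasDerivAt_linear_second_order hI hIc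
    (by fun_prop (disch := intro x hx; have := hq x hx; positivity))
    (by fun_prop (disch := intro x hx; have := hq x hx; positivity)) (hP 3 (by norm_num))
    (fun x hx => (hP 4 (by norm_num) x hx).congr_deriv
      (conicDeriv_five_eq_of_ode c (hq x hx) (hode x hx)))
    hx₀ (hc₀ 3 (by norm_num)) (hc₀ 4 (by norm_num))
  have hIp := hIc.isPreconnected
  have h2 := eqOn_zero_of_hasDerivAt_eqOn_zero hI hIp (hP 2 (by norm_num)) h34.1 hx₀
    (hc₀ 2 (by norm_num))
  have h1 := eqOn_zero_of_hasDerivAt_eqOn_zero hI hIp (hP 1 (by norm_num)) h2 hx₀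
    (hc₀ 1 (by norm_num))
  exact eqOn_zero_of_hasDerivAt_eqOn_zero hI hIp (hP 0 (by norm_num)) h1 hx₀
    (hc₀ 0 (by norm_num))

/-- Let `I ⊆ ℝ` be an open interval and `y : I → ℝ` five times differentiable with
`y'' > 0` on `I`.  Then `y` satisfies the fifth-order ODE
`y⁽⁵⁾·(y'')² = −(40/9)·(y''')³ + 5·y''·y'''·y''''` on `I` if and only if its graph lies on
a conic: there are reals `c_1,…,c_6`, not all zero, with
`c_1·y² + c_2·x·y + c_3·x² + c_4·y + c_5·x + c_6 = 0` on `I`. -/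
theorem ode_iff_graph_on_conic
    (I : Set ℝ) (hIopen : IsOpen I) (hIconn : I.OrdConnected)
    (y : ℝ → ℝ)
    (hy : ∀ k < 5, ∀ x ∈ I, DifferentiableAt ℝ (iteratedDeriv k y) x)
    (hq : ∀ x ∈ I, 0 < iteratedDeriv 2 y x) :
    (∀ x ∈ I,
        iteratedDeriv 5 y x * (iteratedDeriv 2 y x) ^ 2 =
          -(40 / 9) * (iteratedDeriv 3 y x) ^ 3 +
            5 * iteratedDeriv 2 y x * iteratedDeriv 3 y x * iteratedDeriv 4 y x) ↔
    (∃ c : Fin 6 → ℝ, c ≠ 0 ∧ ∀ x ∈ I,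
        c 0 * (y x) ^ 2 + c 1 * x * y x + c 2 * x ^ 2 + c 3 * y x + c 4 * x + c 5 = 0) := by
  constructor
  · intro hode
    rcases I.eq_empty_or_nonempty with rfl | ⟨x₀, hx₀⟩
    · exact ⟨1, one_ne_zero, by simp⟩
    obtain ⟨c, hc, hc₀⟩ := exists_ne_zero_conicDeriv_eq_zero y x₀
    exact ⟨c, hc, conicDeriv_zero_eqOn_zero_of_ode hIopen hIconn hy (fun x hx => (hq x hx).ne')
      hode hx₀ hc₀⟩
  · rintro ⟨c, hc, hconic⟩ x hx
    exact ode_of_conicDeriv_eq_zero hc (hq x hx).ne' fun n hn =>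
      conicDeriv_eqOn_zero_of_eqOn_zero hIopen hy hconic hn hx
end

section
/- Every binary cubic p ∈ ℂ[x,y] (homogeneous of degree 3) that is squarefree, i.e., not divisible by the square of any linear form, can be written as p = u^3 + v^3 for some linearly independent linear forms u, v ∈ ℂ[x,y]. -/
/-!
Over an algebraically closed field a binary cubic is a product of three linear forms
(dehomogenize at `y = 1`, split, homogenize back). Squarefreeness makes any two of them
linearly independent, so `p = x y (a x + b y)` with `x`, `y` independent and `a b ≠ 0`.
If `ω² + ω + 1 = 0` then `u³ + v³ = (u + v)(u + ω v)(u + ω² v)`, and `u`, `v` can be chosen so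
that these three factors are scalar multiples of `x`, `y` and `a x + b y`; a cube root fixes
the product of the scalars.
-/

open MvPolynomial

section LinearForm

variable (σ K : Type*) [Fintype σ] [CommRing K]

noncomputable def linearForm : (σ → K) →ₗ[K] MvPolynomial σ K :=
  Fintype.linearCombination K X

variable {σ K}

lemma isHomogeneous_linearForm (v : σ → K) : (linearForm σ K v).IsHomogeneous 1 := by
  rw [linearForm, Fintype.linearCombination_apply]
  exact IsHomogeneous.sum _ _ _ fun i _ => by
    simpa [smul_eq_C_mul] using (isHomogeneous_X K i).C_mul (v i)

lemma linearForm_injective : Function.Injective (linearForm σ K) :=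
  (linearIndependent_X σ K).fintypeLinearCombination_injective

lemma linearIndependent_linearForm_pair_iff {v w : σ → K} :
    LinearIndependent K ![linearForm σ K v, linearForm σ K w] ↔ LinearIndependent K ![v, w] := by
  rw [← (linearForm σ K).linearIndependent_iff (LinearMap.ker_eq_bot.mpr linearForm_injective)]
  congr! 1
  ext i
  fin_cases i <;> rfl

end LinearForm

lemma Polynomial.homogenize_prod_X_sub_C {R : Type*} [CommRing R] [Nontrivial R]
    (s : Multiset R) :
    (s.map fun r => X - C r).prod.homogenize (Multiset.card s) =
      (s.map fun r => linearForm (Fin 2) R ![1, -r]).prod := by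
  induction s using Multiset.induction_on with
  | empty => simp
  | cons r s ih =>
    rw [Multiset.map_cons, Multiset.prod_cons, Multiset.card_cons, add_comm,
      homogenize_mul _ _ (natDegree_X_sub_C_le r) (natDegree_multiset_prod_X_sub_C_eq_card s).le,
      ih, Multiset.map_cons, Multiset.prod_cons]
    congr 1
    simp [linearForm, Fintype.linearCombination_apply, MvPolynomial.smul_eq_C_mul, sub_eq_add_neg]

theorem MvPolynomial.IsHomogeneous.exists_eq_C_mul_prod_linearForm {K : Type*} [Field K]
    [IsAlgClosed K] {p : MvPolynomial (Fin 2) K} {n : ℕ} (hp : p.IsHomogeneous n) :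
    ∃ (c : K) (s : Multiset (Fin 2 → K)),
      Multiset.card s = n ∧ p = C c * (s.map (linearForm (Fin 2) K)).prod := by
  set f : Polynomial K := MvPolynomial.aeval ![Polynomial.X, 1] p
  have hf : f.natDegree ≤ n := by
    simpa using aeval_natDegree_le p hp.totalDegree_le _ (n := 1) (by intro i; fin_cases i <;> simp)
  have hroots : Multiset.card f.roots = f.natDegree := IsAlgClosed.card_roots_eq_natDegree
  refine ⟨f.leadingCoeff, f.roots.map (fun r => ![1, -r]) +
    Multiset.replicate (n - f.natDegree) ![0, 1], by simp [hroots, hf], ?_⟩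
  have hX1 : linearForm (Fin 2) K ![0, 1] = X 1 := by
    simp [linearForm, Fintype.linearCombination_apply]
  set g := (f.roots.map fun r => Polynomial.X - Polynomial.C r).prod
  have hg : (Polynomial.C f.leadingCoeff * g).natDegree ≤ Multiset.card f.roots :=
    (Polynomial.natDegree_C_mul_le _ _).trans
      (Polynomial.natDegree_multiset_prod_X_sub_C_eq_card _).le
  calc p = f.homogenize n := (Polynomial.homogenize_eq_of_isHomogeneous hp rfl).symm
    _ = (Polynomial.C f.leadingCoeff * g * 1).homogenize
          (Multiset.card f.roots + (n - Multiset.card f.roots)) := by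
        rw [mul_one, Polynomial.C_leadingCoeff_mul_prod_multiset_X_sub_C hroots,
          Nat.add_sub_cancel' (hroots ▸ hf)]
    _ = _ := by
      rw [Polynomial.homogenize_mul _ _ hg (by simp), Polynomial.homogenize_C_mul,
        Polynomial.homogenize_prod_X_sub_C]
      simp [hroots, hX1, mul_assoc]

-- For the two cubed terms `u`, `v`: `u + v`, `u + ω v`, `u + ω² v` are multiples of `x`, `y` and
-- `a x + b y` (using `ω³ = 1`), with product of the multipliers `s³ (ω - 1)³ a b`.
theorem pow_three_add_pow_three_eq_mul_mul_add {R : Type*} [CommRing R] {ω s a b : R}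
    (hω : ω ^ 2 + ω + 1 = 0) (hs : s ^ 3 * (ω - 1) ^ 3 * (a * b) = 1) (x y : R) :
    (s * (ω * b * y - a * x)) ^ 3 + (s * (ω ^ 2 * a * x - ω * b * y)) ^ 3 =
      x * y * (a * x + b * y) := by
  linear_combination x * y * (a * x + b * y) * hs + (ω - 1) * s ^ 3 *
    ((ω ^ 3 + 1) * a ^ 3 * x ^ 3 + (3 * ω - 1) * a * b ^ 2 * x * y ^ 2
      - (3 * ω ^ 2 + 1) * a ^ 2 * b * x ^ 2 * y) * hω

theorem exists_pow_three_add_pow_three_eq_mul_mul_smul_add {K A : Type*} [Field K] [IsAlgClosed K]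
    [CommRing A] [Algebra K A] (h3 : (3 : K) ≠ 0) {a b : K} (ha : a ≠ 0) (hb : b ≠ 0)
    (x y : A) :
    ∃ α₁ α₂ β₁ β₂ : K, α₁ * β₂ - α₂ * β₁ ≠ 0 ∧
      (α₁ • x + α₂ • y) ^ 3 + (β₁ • x + β₂ • y) ^ 3 = x * y * (a • x + b • y) := by
  obtain ⟨ω, hω⟩ : ∃ ω : K, ω ^ 2 + ω + 1 = 0 := by
    obtain ⟨ω, hω⟩ := IsAlgClosed.exists_root (Polynomial.X ^ 2 + Polynomial.X + 1 : Polynomial K)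
      (by rw [show (Polynomial.X ^ 2 + Polynomial.X + 1 : Polynomial K).degree = 2 by
        compute_degree!]; decide)
    exact ⟨ω, by simpa using hω⟩
  have hω1 : ω - 1 ≠ 0 := by
    intro h
    rw [sub_eq_zero.mp h] at hω
    exact h3 (by linear_combination hω)
  obtain ⟨s, hs3⟩ := IsAlgClosed.exists_pow_nat_eq ((ω - 1) ^ 3 * (a * b))⁻¹ three_pos
  have hs : s ^ 3 * (ω - 1) ^ 3 * (a * b) = 1 := by
    rw [hs3, mul_assoc, inv_mul_cancel₀ (by positivity)]
  have hs0 : s ≠ 0 := by rintro rfl; simp at hs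
  refine ⟨-(s * a), s * ω * b, s * ω ^ 2 * a, -(s * ω * b), ?_, ?_⟩
  · have hω3 : ω ^ 3 = 1 := by linear_combination (ω - 1) * hω
    have hdet : -(s * a) * -(s * ω * b) - s * ω * b * (s * ω ^ 2 * a) =
        s ^ 2 * a * b * (ω - 1) := by
      linear_combination (- s ^ 2 * a * b) * hω3
    rw [hdet]
    exact mul_ne_zero (by positivity) hω1
  · have hA := pow_three_add_pow_three_eq_mul_mul_add (R := A) (s := algebraMap K A s)
      (a := algebraMap K A a) (b := algebraMap K A b)
      (by simpa using congrArg (algebraMap K A) hω)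
      (by simpa using congrArg (algebraMap K A) hs) x y
    simp only [Algebra.smul_def, map_mul, map_neg, map_pow]
    linear_combination hA

theorem LinearIndependent.pair_smul_add_smul {K V : Type*} [CommRing K] [IsDomain K]
    [AddCommGroup V] [Module K V] {x y : V} (h : LinearIndependent K ![x, y]) {α₁ α₂ β₁ β₂ : K}
    (hdet : α₁ * β₂ - α₂ * β₁ ≠ 0) :
    LinearIndependent K ![α₁ • x + α₂ • y, β₁ • x + β₂ • y] := by
  rw [LinearIndependent.pair_iff] at h ⊢
  intro s t hst
  obtain ⟨h₁, h₂⟩ := h (s * α₁ + t * β₁) (s * α₂ + t * β₂) (by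
    rw [← hst]; simp only [add_smul, mul_smul, smul_add]; abel)
  refine ⟨(mul_eq_zero.mp ?_).resolve_right hdet, (mul_eq_zero.mp ?_).resolve_right hdet⟩
  · linear_combination β₂ * h₁ - β₁ * h₂
  · linear_combination α₁ * h₂ - α₂ * h₁

theorem sq_dvd_mul_of_not_linearIndependent {K A : Type*} [Field K] [CommRing A] [Algebra K A]
    {x y : A} (hx : x ≠ 0) (h : ¬LinearIndependent K ![x, y]) : x ^ 2 ∣ x * y := by
  obtain ⟨k, rfl⟩ : ∃ k : K, k • x = y := by
    simpa [LinearIndependent.pair_iff' hx] using h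
  exact ⟨algebraMap K A k, by rw [Algebra.smul_def]; ring⟩

theorem LinearIndependent.exists_smul_add_smul_eq {K V : Type*} [Field K] [AddCommGroup V]
    [Module K V] (hV : Module.finrank K V = 2) {v₁ v₂ : V} (h : LinearIndependent K ![v₁, v₂])
    (w : V) : ∃ a b : K, a • v₁ + b • v₂ = w := by
  have hw : w ∈ Submodule.span K (Set.range ![v₁, v₂]) := by
    rw [h.span_eq_top_of_card_eq_finrank (by simp [hV])]; trivial
  obtain ⟨c, hc⟩ := (Submodule.mem_span_range_iff_exists_fun K).mp hw
  exact ⟨c 0, c 1, by simpa [Fin.sum_univ_two] using hc⟩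

theorem MvPolynomial.IsHomogeneous.exists_eq_mul_mul_smul_add_smul {K : Type*} [Field K]
    [IsAlgClosed K] {p : MvPolynomial (Fin 2) K} (hp : p.IsHomogeneous 3)
    (hsf : ∀ ℓ : MvPolynomial (Fin 2) K, ℓ.IsHomogeneous 1 → ℓ ≠ 0 → ¬ (ℓ ^ 2 ∣ p)) :
    ∃ x y : MvPolynomial (Fin 2) K, x.IsHomogeneous 1 ∧ y.IsHomogeneous 1 ∧
      LinearIndependent K ![x, y] ∧ ∃ a b : K, a ≠ 0 ∧ b ≠ 0 ∧ p = x * y * (a • x + b • y) := by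
  obtain ⟨c, s, hs, rfl⟩ := hp.exists_eq_C_mul_prod_linearForm
  obtain ⟨v₁, v₂, v₃, rfl⟩ := Multiset.card_eq_three.mp hs
  simp only [Multiset.insert_eq_cons, Multiset.map_cons, Multiset.prod_cons,
    Multiset.map_singleton, Multiset.prod_singleton] at hsf ⊢
  set ℓ := linearForm (Fin 2) K
  have hℓ : ∀ {v}, v ≠ 0 → ℓ v ≠ 0 := (map_ne_zero_iff ℓ linearForm_injective).mpr
  have hsf' : ∀ v, v ≠ 0 → ¬ ℓ v ^ 2 ∣ C c * (ℓ v₁ * (ℓ v₂ * ℓ v₃)) := fun v hv =>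
    hsf _ (isHomogeneous_linearForm v) (hℓ hv)
  have hp0 : C c * (ℓ v₁ * (ℓ v₂ * ℓ v₃)) ≠ 0 := fun h => hsf' 1 one_ne_zero (h ▸ dvd_zero _)
  have indep : ∀ {v} w, v ≠ 0 → ℓ v * ℓ w ∣ C c * (ℓ v₁ * (ℓ v₂ * ℓ v₃)) →
      LinearIndependent K ![v, w] := fun _ hv hvw =>
    by_contra fun h => hsf' _ hv <| (sq_dvd_mul_of_not_linearIndependent (hℓ hv)
      (linearIndependent_linearForm_pair_iff.not.mpr h)).trans hvw
  obtain ⟨hc, hv₁, hv₂⟩ : c ≠ 0 ∧ v₁ ≠ 0 ∧ v₂ ≠ 0 := by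
    refine ⟨?_, ?_, ?_⟩ <;> rintro rfl <;> simp at hp0
  have h₁₂ := indep v₂ hv₁ ⟨C c * ℓ v₃, by ring⟩
  have h₁₃ := indep v₃ hv₁ ⟨C c * ℓ v₂, by ring⟩
  have h₂₃ := indep v₃ hv₂ ⟨C c * ℓ v₁, by ring⟩
  obtain ⟨a, b, rfl⟩ := h₁₂.exists_smul_add_smul_eq (by simp) v₃
  have ha : a ≠ 0 := by
    rintro rfl; exact (LinearIndependent.pair_iff' hv₂).mp h₂₃ b (by simp)
  have hb : b ≠ 0 := by
    rintro rfl; exact (LinearIndependent.pair_iff' hv₁).mp h₁₃ a (by simp)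
  refine ⟨ℓ v₁, ℓ v₂, isHomogeneous_linearForm v₁, isHomogeneous_linearForm v₂,
    linearIndependent_linearForm_pair_iff.mpr h₁₂, c * a, c * b, mul_ne_zero hc ha,
    mul_ne_zero hc hb, ?_⟩
  simp only [map_add, map_smul, smul_eq_C_mul, map_mul]
  ring

/-- Every squarefree binary cubic (a homogeneous polynomial of degree 3 in `ℂ[x,y]` not
divisible by the square of any nonzero linear form) is a sum of two cubes of linearly
independent linear forms. -/
theorem squarefree_cubic_sum_of_two_cubes
    (p : MvPolynomial (Fin 2) ℂ) (hp : p.IsHomogeneous 3)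
    (hsf : ∀ ℓ : MvPolynomial (Fin 2) ℂ, ℓ.IsHomogeneous 1 → ℓ ≠ 0 → ¬ (ℓ ^ 2 ∣ p)) :
    ∃ u v : MvPolynomial (Fin 2) ℂ,
      u.IsHomogeneous 1 ∧ v.IsHomogeneous 1 ∧
      LinearIndependent ℂ ![u, v] ∧ p = u ^ 3 + v ^ 3 := by
  obtain ⟨x, y, hx, hy, hxy, a, b, ha, hb, rfl⟩ := hp.exists_eq_mul_mul_smul_add_smul hsf
  obtain ⟨α₁, α₂, β₁, β₂, hdet, hsum⟩ :=
    exists_pow_three_add_pow_three_eq_mul_mul_smul_add three_ne_zero ha hb x y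
  have hlin : ∀ γ δ : ℂ, (γ • x + δ • y).IsHomogeneous 1 := fun γ δ => by
    simpa only [smul_eq_C_mul] using (hx.C_mul γ).add (hy.C_mul δ)
  exact ⟨_, _, hlin α₁ α₂, hlin β₁ β₂, hxy.pair_smul_add_smul hdet, hsum.symm⟩
end

section
/- Let u, v be linearly independent linear forms in ℂ[x,y] and let w, k be linearly independent linear forms in ℂ[x,y]. If u^3 + v^3 = w^3 + k^3, then either (w, k) = (ζ·u, ζ'·v) or (w, k) = (ζ·v, ζ'·u) for some cube roots of unity ζ, ζ' ∈ ℂ. In particular, the unordered pair of projective points {[u], [v]} ∈ ℙ(ℂ^2) determined by a decomposition of a binary cubic as a sum of two cubes of independent linear forms is unique: every point of ℂP^3 = ℙ(Sym^3(ℂ^2)) off the tangent surface of the rational normal curve lies on a unique secant of that curve. -/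
/-!
In coordinates, `u, v` form a basis of the two-dimensional space of linear forms, so
`w = αu + βv` and `k = γu + δv`; moreover `x ↦ (u(x), v(x))` is onto the plane, so
`s³ + t³ = (αs + βt)³ + (γs + δt)³` holds for all `s, t`. Comparing coefficients gives
`α³ + γ³ = β³ + δ³ = 1` and `α²β + γ²δ = αβ² + γδ² = 0`, which force the substitution to be
diagonal or antidiagonal with cube roots of unity as entries.
-/

open MvPolynomial

namespace MvPolynomial

variable {σ R : Type*} [Fintype σ] [CommSemiring R]

theorem IsHomogeneous.exists_linearCombination_X_eq {p : MvPolynomial σ R}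
    (hp : p.IsHomogeneous 1) : ∃ a : σ → R, Fintype.linearCombination R X a = p := by
  have : p ∈ Submodule.span R (Set.range X) := by
    rw [← homogeneousSubmodule_one_eq_span_X]; exact hp
  simpa [Fintype.linearCombination_apply] using Submodule.mem_span_range_iff_exists_fun R |>.mp this

@[simp]
theorem eval_linearCombination_X (a x : σ → R) :
    eval x (Fintype.linearCombination R X a) = a ⬝ᵥ x := by
  simp [Fintype.linearCombination_apply, dotProduct, smul_eq_C_mul]

end MvPolynomial

section Plane

variable {K : Type*} [Field K] {a b : Fin 2 → K}

theorem exists_eq_smul_add_smul_of_linearIndependent (hab : LinearIndependent K ![a, b])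
    (c : Fin 2 → K) : ∃ α β : K, c = α • a + β • b := by
  have hspan := hab.span_eq_top_of_card_eq_finrank (by simp)
  have hc : c ∈ Submodule.span K {a, b} := by
    rw [← Matrix.range_cons_cons_empty a b ![], hspan]; trivial
  obtain ⟨α, β, h⟩ := Submodule.mem_span_pair.mp hc
  exact ⟨α, β, h.symm⟩

theorem exists_dotProduct_eq_of_linearIndependent (hab : LinearIndependent K ![a, b])
    (s t : K) : ∃ x : Fin 2 → K, a ⬝ᵥ x = s ∧ b ⬝ᵥ x = t := by
  have hM : IsUnit (Matrix.of ![a, b]) := Matrix.linearIndependent_rows_iff_isUnit.mp hab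
  obtain ⟨x, hx⟩ := Matrix.mulVec_surjective_iff_isUnit.mpr hM ![s, t]
  exact ⟨x, by simpa using congrFun hx 0, by simpa using congrFun hx 1⟩

end Plane

section CubeAddCube

variable {R : Type*} [CommRing R] [IsDomain R] {α β γ δ : R}

theorem cubic_coeff_eqs_of_forall_cube_add_cube (h6 : (6 : R) ≠ 0)
    (h : ∀ s t : R, s ^ 3 + t ^ 3 = (α * s + β * t) ^ 3 + (γ * s + δ * t) ^ 3) :
    α ^ 3 + γ ^ 3 = 1 ∧ β ^ 3 + δ ^ 3 = 1 ∧
      α ^ 2 * β + γ ^ 2 * δ = 0 ∧ α * β ^ 2 + γ * δ ^ 2 = 0 := by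
  have h₁ : α ^ 3 + γ ^ 3 = 1 := by linear_combination -h 1 0
  have h₂ : β ^ 3 + δ ^ 3 = 1 := by linear_combination -h 0 1
  have h₃ : 6 * (α ^ 2 * β + γ ^ 2 * δ) = 0 := by
    linear_combination h 1 (-1) - h 1 1 - 2 * h₂
  have h₄ : 6 * (α * β ^ 2 + γ * δ ^ 2) = 0 := by
    linear_combination -2 * h₁ - h 1 1 - h 1 (-1)
  exact ⟨h₁, h₂, (mul_eq_zero.mp h₃).resolve_left h6, (mul_eq_zero.mp h₄).resolve_left h6⟩

theorem diagonal_or_antidiagonal_of_forall_cube_add_cube (h6 : (6 : R) ≠ 0)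
    (h : ∀ s t : R, s ^ 3 + t ^ 3 = (α * s + β * t) ^ 3 + (γ * s + δ * t) ^ 3) :
    (α ^ 3 = 1 ∧ δ ^ 3 = 1 ∧ β = 0 ∧ γ = 0) ∨ (β ^ 3 = 1 ∧ γ ^ 3 = 1 ∧ α = 0 ∧ δ = 0) := by
  obtain ⟨h₁, h₂, h₃, h₄⟩ := cubic_coeff_eqs_of_forall_cube_add_cube h6 h
  by_cases hα : α = 0
  · subst hα
    have hγ : γ ≠ 0 := by rintro rfl; norm_num at h₁
    have hδ : δ = 0 := by simpa [hγ] using h₃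
    subst hδ
    exact Or.inr ⟨by simpa using h₂, by simpa using h₁, rfl, rfl⟩
  by_cases hβ : β = 0
  · subst hβ
    have hδ : δ ≠ 0 := by rintro rfl; norm_num at h₂
    have hγ : γ = 0 := by simpa [hδ] using h₄
    subst hγ
    exact Or.inl ⟨by simpa using h₁, by simpa using h₂, rfl, rfl⟩
  -- With `αβ ≠ 0` the mixed equations force `αδ = βγ`, and then `β = β(α³ + γ³) = α(α²β + γ²δ) = 0`.
  exfalso
  have hδ : δ ≠ 0 := by
    rintro rfl
    exact mul_ne_zero hα (pow_ne_zero 2 hβ) (by simpa using h₄)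
  have hdet : α * δ = β * γ := by
    have : α * β * δ * (α * δ - β * γ) = 0 := by linear_combination δ ^ 2 * h₃ - γ * δ * h₄
    simpa [hα, hβ, hδ, sub_eq_zero] using this
  exact hβ (by linear_combination -β * h₁ + α * h₃ - γ ^ 2 * hdet)

end CubeAddCube

theorem secant_decomposition_unique_general
    (u v w k : MvPolynomial (Fin 2) ℂ)
    (hu : u.IsHomogeneous 1) (hv : v.IsHomogeneous 1)
    (hw : w.IsHomogeneous 1) (hk : k.IsHomogeneous 1)
    (huv : LinearIndependent ℂ ![u, v])
    (heq : u ^ 3 + v ^ 3 = w ^ 3 + k ^ 3) :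
    ∃ ζ ζ' : ℂ, ζ ^ 3 = 1 ∧ ζ' ^ 3 = 1 ∧
      ((w = ζ • u ∧ k = ζ' • v) ∨ (w = ζ • v ∧ k = ζ' • u)) := by
  obtain ⟨a, rfl⟩ := hu.exists_linearCombination_X_eq
  obtain ⟨b, rfl⟩ := hv.exists_linearCombination_X_eq
  obtain ⟨c, rfl⟩ := hw.exists_linearCombination_X_eq
  obtain ⟨d, rfl⟩ := hk.exists_linearCombination_X_eq
  have hab : LinearIndependent ℂ ![a, b] :=
    .of_comp (Fintype.linearCombination ℂ X) (by rw [← FinVec.map_eq]; exact huv)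
  obtain ⟨α, β, rfl⟩ := exists_eq_smul_add_smul_of_linearIndependent hab c
  obtain ⟨γ, δ, rfl⟩ := exists_eq_smul_add_smul_of_linearIndependent hab d
  have hcubes : ∀ s t : ℂ, s ^ 3 + t ^ 3 = (α * s + β * t) ^ 3 + (γ * s + δ * t) ^ 3 := by
    intro s t
    obtain ⟨x, rfl, rfl⟩ := exists_dotProduct_eq_of_linearIndependent hab s t
    simpa [add_dotProduct] using congrArg (eval x) heq
  rcases diagonal_or_antidiagonal_of_forall_cube_add_cube (by norm_num) hcubes with
    ⟨hα, hδ, rfl, rfl⟩ | ⟨hβ, hγ, rfl, rfl⟩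
  · exact ⟨α, δ, hα, hδ, .inl ⟨by simp, by simp⟩⟩
  · exact ⟨β, γ, hβ, hγ, .inr ⟨by simp, by simp⟩⟩

/-- Uniqueness of the secant of the rational normal curve: if `u³ + v³ = w³ + k³` for two
pairs of linearly independent linear forms `(u,v)` and `(w,k)` in `ℂ[x,y]`, then
`(w,k) = (ζ·u, ζ'·v)` or `(w,k) = (ζ·v, ζ'·u)` for some cube roots of unity `ζ, ζ'`. -/
theorem secant_decomposition_unique
    (u v w k : MvPolynomial (Fin 2) ℂ)
    (hu : u.IsHomogeneous 1) (hv : v.IsHomogeneous 1)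
    (hw : w.IsHomogeneous 1) (hk : k.IsHomogeneous 1)
    (huv : LinearIndependent ℂ ![u, v]) (hwk : LinearIndependent ℂ ![w, k])
    (heq : u ^ 3 + v ^ 3 = w ^ 3 + k ^ 3) :
    ∃ ζ ζ' : ℂ, ζ ^ 3 = 1 ∧ ζ' ^ 3 = 1 ∧
      ((w = ζ • u ∧ k = ζ' • v) ∨ (w = ζ • v ∧ k = ζ' • u)) :=
  secant_decomposition_unique_general u v w k hu hv hw hk huv heq
end

section
/- Let u = u_0·x + u_1·y and v = v_0·x + v_1·y be linear forms in ℂ[x,y] and let t, s ∈ ℂ. Then ⟨t·u^3 + s·v^3, t·u^3 + s·v^3⟩_2 = 72·t·s·(u_0 v_1 − u_1 v_0)^2 · u·v. In particular, for t·s ≠ 0 and u, v linearly independent, the binary quadratic Q(p) := ⟨p,p⟩_2 of the cubic p = t·u^3 + s·v^3 is a nonzero multiple of u·v, so its projective roots are exactly the two points [u], [v] of the secant decomposition of p. -/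
open MvPolynomial

/-!
`⟨φ, φ⟩₂` is twice the Hessian determinant of `φ`. The Hessian matrix of `ℓ³` for a linear form
`ℓ = a₀x + a₁y` is `6ℓ·(aᵢaⱼ)`, of rank one, so in the Hessian determinant of `t·u³ + s·v³` only
the mixed terms survive, and they combine to `36·t·s·(u₀v₁ − u₁v₀)²·u·v`.
-/

namespace MvPolynomial

variable {σ R : Type*} [CommRing R]

theorem pderiv_pderiv_pow {ℓ : MvPolynomial σ R} {i j : σ} {a b : R}
    (hi : pderiv i ℓ = C a) (hj : pderiv j ℓ = C b) (n : ℕ) :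
    pderiv i (pderiv j (ℓ ^ n)) = C (n * (n - 1) * a * b) * ℓ ^ (n - 2) := by
  rcases n with _ | _ | n
  · simp
  · simp [hj]
  · simp only [pderiv_pow, pderiv_mul, hi, hj, pderiv_C, Derivation.map_natCast, map_mul, map_sub,
      map_natCast, map_one]
    push_cast
    ring

theorem pderiv_zero_C_mul_X_add_C_mul_X (a b : R) :
    pderiv 0 (C a * X 0 + C b * X 1 : MvPolynomial (Fin 2) R) = C a := by
  simp [pderiv_X]

theorem pderiv_one_C_mul_X_add_C_mul_X (a b : R) :
    pderiv 1 (C a * X 0 + C b * X 1 : MvPolynomial (Fin 2) R) = C b := by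
  simp [pderiv_X]

end MvPolynomial

theorem transvectant_two_self (φ : MvPolynomial (Fin 2) ℂ) :
    transvectant 2 φ φ = 2 * (dX (dX φ) * dY (dY φ) - dX (dY φ) ^ 2) := by
  simp only [transvectant, Finset.sum_range_succ, Finset.sum_range_zero]
  norm_num [Function.iterate_succ_apply, smul_eq_C_mul, map_ofNat]
  ring

/-- For linear forms `u = u₀x + u₁y`, `v = v₀x + v₁y` and scalars `t, s`:
`⟨t·u³ + s·v³, t·u³ + s·v³⟩₂ = 72·t·s·(u₀v₁ − u₁v₀)²·u·v`. -/
theorem transvectant_of_sum_of_cubes (u₀ u₁ v₀ v₁ t s : ℂ) :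
    transvectant 2
        (t • (C u₀ * X 0 + C u₁ * X 1) ^ 3 + s • (C v₀ * X 0 + C v₁ * X 1) ^ 3)
        (t • (C u₀ * X 0 + C u₁ * X 1) ^ 3 + s • (C v₀ * X 0 + C v₁ * X 1) ^ 3)
      = (72 * t * s * (u₀ * v₁ - u₁ * v₀) ^ 2) •
          ((C u₀ * X 0 + C u₁ * X 1) * (C v₀ * X 0 + C v₁ * X 1)) := by
  have hu₀ := pderiv_zero_C_mul_X_add_C_mul_X u₀ u₁
  have hu₁ := pderiv_one_C_mul_X_add_C_mul_X u₀ u₁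
  have hv₀ := pderiv_zero_C_mul_X_add_C_mul_X v₀ v₁
  have hv₁ := pderiv_one_C_mul_X_add_C_mul_X v₀ v₁
  rw [transvectant_two_self]
  simp only [dX, dY, map_add, Derivation.map_smul, pderiv_pderiv_pow hu₀ hu₀,
    pderiv_pderiv_pow hu₀ hu₁, pderiv_pderiv_pow hu₁ hu₁, pderiv_pderiv_pow hv₀ hv₀,
    pderiv_pderiv_pow hv₀ hv₁, pderiv_pderiv_pow hv₁ hv₁]
  simp only [smul_eq_C_mul, map_mul, map_sub, map_pow, map_ofNat, map_one, Nat.cast_ofNat]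
  ring
end

section
/- For every binary quadratic h ∈ ℂ[x,y] (homogeneous of degree 2) and all binary cubics p, v ∈ ℂ[x,y] (homogeneous of degree 3), the identity ⟨⟨h,p⟩_1, v⟩_3 = (3/2)·⟨h, ⟨p,v⟩_2⟩_2 holds in ℂ. Here p ↦ ⟨h,p⟩_1 is the infinitesimal action on binary cubics of the element of sl(2,ℂ) corresponding to the quadratic h, and the identity expresses that the quadratic map Q(p) = ⟨p,p⟩_2 is a moment map for the symplectic form Ω(p,v) = ⟨p,v⟩_3 on the space Sym^3(ℂ^2) of binary cubics. -/
open MvPolynomial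

/-!
Both sides are trilinear in `(h, p, v)`, so by expanding binary forms in the monomial basis it
suffices to treat `h = x^i y^(2-i)`, `p = x^j y^(3-j)`, `v = x^l y^(3-l)`. On monomials the
transvectant is explicit: `⟨x^a y^b, x^c y^d⟩_k` is the monomial `x^(a+c-k) y^(b+d-k)` times the
integer `Σ_j (-1)^j (k choose j) a^(k-j) b^(j) c^(j) d^(k-j)` of falling factorials. The identity
thereby becomes 48 identities between integers, checked by evaluation.
-/

local notation "𝒫" => MvPolynomial (Fin 2) ℂ

namespace MvPolynomial

theorem iterate_pderiv_X_pow_mul {R σ : Type*} [CommSemiring R] {i : σ} {m : MvPolynomial σ R}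
    (hm : pderiv i m = 0) (a n : ℕ) :
    (pderiv i)^[n] (X i ^ a * m) = a.descFactorial n • (X i ^ (a - n) * m) := by
  induction n with
  | zero => simp
  | succ n ih =>
    rw [Function.iterate_succ_apply', ih, map_nsmul, pderiv_mul, hm, pderiv_pow, pderiv_X_self,
      Nat.descFactorial_succ]
    simp only [Nat.sub_sub, nsmul_eq_mul, mul_zero, add_zero, mul_one, Nat.cast_mul]
    ring

theorem IsHomogeneous.eq_sum_range_X_pow_mul_X_pow {R : Type*} [CommSemiring R]
    {f : MvPolynomial (Fin 2) R} {n : ℕ} (hf : f.IsHomogeneous n) :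
    f = ∑ i ∈ Finset.range (n + 1),
      coeff (Finsupp.single 0 i + Finsupp.single 1 (n - i)) f • (X 0 ^ i * X 1 ^ (n - i)) := by
  set e : ℕ → Fin 2 →₀ ℕ := fun i => Finsupp.single 0 i + Finsupp.single 1 (n - i)
  have he : Set.InjOn e (Finset.range (n + 1)) := fun i _ j _ hij => by
    simpa [e] using congr($hij 0)
  have hsupp : f.support ⊆ (Finset.range (n + 1)).image e := by
    intro d hd
    have hdeg : d 0 + d 1 = n := by
      rw [← Fin.sum_univ_two, ← Finsupp.degree_eq_sum, Finsupp.degree_eq_weight_one]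
      exact hf (mem_support_iff.mp hd)
    refine Finset.mem_image.mpr ⟨d 0, Finset.mem_range.mpr (by omega), ?_⟩
    ext k
    fin_cases k
    · simp [e]
    · simp [e]; omega
  calc f = ∑ d ∈ f.support, monomial d (coeff d f) := f.as_sum
    _ = ∑ d ∈ (Finset.range (n + 1)).image e, monomial d (coeff d f) :=
      Finset.sum_subset hsupp fun d _ hd => by rw [notMem_support_iff.mp hd, monomial_zero]
    _ = _ := by
      rw [Finset.sum_image he]
      refine Finset.sum_congr rfl fun i _ => ?_
      rw [X_pow_eq_monomial, X_pow_eq_monomial, monomial_mul, one_mul, smul_monomial, smul_eq_mul,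
        mul_one]

end MvPolynomial

theorem iterate_dX (n : ℕ) :
    dX^[n] = ⇑((pderiv (0 : Fin 2) : Derivation ℂ 𝒫 𝒫).toLinearMap ^ n) := by
  rw [Module.End.coe_pow]; rfl

theorem iterate_dY (n : ℕ) :
    dY^[n] = ⇑((pderiv (1 : Fin 2) : Derivation ℂ 𝒫 𝒫).toLinearMap ^ n) := by
  rw [Module.End.coe_pow]; rfl

noncomputable def transvectantBilin (k : ℕ) : 𝒫 →ₗ[ℂ] 𝒫 →ₗ[ℂ] 𝒫 :=
  ∑ j ∈ Finset.range (k + 1), ((-1 : ℂ) ^ j * (k.choose j : ℂ)) •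
    (LinearMap.mul ℂ 𝒫).compl₁₂
      ((pderiv (0 : Fin 2) : Derivation ℂ 𝒫 𝒫).toLinearMap ^ (k - j) *
        (pderiv (1 : Fin 2) : Derivation ℂ 𝒫 𝒫).toLinearMap ^ j)
      ((pderiv (0 : Fin 2) : Derivation ℂ 𝒫 𝒫).toLinearMap ^ j *
        (pderiv (1 : Fin 2) : Derivation ℂ 𝒫 𝒫).toLinearMap ^ (k - j))

theorem transvectantBilin_apply (k : ℕ) (φ ψ : 𝒫) :
    transvectantBilin k φ ψ = transvectant k φ ψ := by
  simp [transvectantBilin, transvectant, iterate_dX, iterate_dY]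

theorem transvectant_smul_left (k : ℕ) (c : ℂ) (φ ψ : 𝒫) :
    transvectant k (c • φ) ψ = c • transvectant k φ ψ := by
  simp only [← transvectantBilin_apply, map_smul, LinearMap.smul_apply]

theorem transvectant_smul_right (k : ℕ) (c : ℂ) (φ ψ : 𝒫) :
    transvectant k φ (c • ψ) = c • transvectant k φ ψ := by
  simp only [← transvectantBilin_apply, map_smul]

theorem iterate_dX_iterate_dY_X_pow_mul_X_pow (m n a b : ℕ) :
    dX^[m] (dY^[n] (X 0 ^ a * X 1 ^ b)) =
      (a.descFactorial m * b.descFactorial n) • (X 0 ^ (a - m) * X 1 ^ (b - n)) := by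
  have hY : dY^[n] (X 0 ^ a * X 1 ^ b) = b.descFactorial n • (X 0 ^ a * X 1 ^ (b - n)) := by
    rw [mul_comm, mul_comm (X 0 ^ a)]
    exact iterate_pderiv_X_pow_mul (by simp) b n
  have hX : dX^[m] (X 0 ^ a * X 1 ^ (b - n)) =
      a.descFactorial m • (X 0 ^ (a - m) * X 1 ^ (b - n)) :=
    iterate_pderiv_X_pow_mul (by simp) a m
  rw [hY, iterate_dX, map_nsmul, ← iterate_dX, hX, smul_smul, mul_comm]

def transvectantCoeff (k a b c d : ℕ) : ℤ :=
  ∑ j ∈ Finset.range (k + 1), (-1) ^ j * (k.choose j : ℤ) *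
    (a.descFactorial (k - j) * b.descFactorial j * c.descFactorial j * d.descFactorial (k - j) :
      ℕ)

-- The exponents are truncated subtractions; they are the true ones whenever the coefficient is
-- nonzero.
theorem transvectant_X_pow_mul_X_pow (k a b c d : ℕ) :
    transvectant k (X 0 ^ a * X 1 ^ b) (X 0 ^ c * X 1 ^ d) =
      (transvectantCoeff k a b c d : ℂ) • (X 0 ^ (a + c - k) * X 1 ^ (b + d - k)) := by
  rw [transvectant, transvectantCoeff, Int.cast_sum, Finset.sum_smul]
  refine Finset.sum_congr rfl fun j hj => ?_
  set N :=
    a.descFactorial (k - j) * b.descFactorial j * c.descFactorial j * d.descFactorial (k - j)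
  have hmono :
      N • ((X 0 ^ (a - (k - j)) * X 1 ^ (b - j)) * (X 0 ^ (c - j) * X 1 ^ (d - (k - j)))) =
        N • (X 0 ^ (a + c - k) * X 1 ^ (b + d - k) : 𝒫) := by
    by_cases hN : N = 0
    · simp only [hN, zero_smul]
    · simp only [N, mul_ne_zero_iff, ne_eq, Nat.descFactorial_eq_zero_iff_lt, not_lt] at hN
      have := Finset.mem_range.mp hj
      rw [mul_mul_mul_comm, ← pow_add, ← pow_add]
      congr 3 <;> omega
  rw [iterate_dX_iterate_dY_X_pow_mul_X_pow, iterate_dX_iterate_dY_X_pow_mul_X_pow,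
    smul_mul_smul_comm, ← mul_assoc (a.descFactorial (k - j) * b.descFactorial j), hmono,
    ← Nat.cast_smul_eq_nsmul ℂ, smul_smul]
  push_cast
  rfl

-- The disjunction makes both sides multiples of the same monomial, or both zero.
theorem transvectantCoeff_moment_map : ∀ i ≤ 2, ∀ j ≤ 3, ∀ l ≤ 3,
    2 * (transvectantCoeff 1 i (2 - i) j (3 - j) *
        transvectantCoeff 3 (i + j - 1) (2 - i + (3 - j) - 1) l (3 - l))
      = 3 * (transvectantCoeff 2 j (3 - j) l (3 - l) *
        transvectantCoeff 2 i (2 - i) (j + l - 2) (3 - j + (3 - l) - 2)) ∧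
    (transvectantCoeff 1 i (2 - i) j (3 - j) *
        transvectantCoeff 3 (i + j - 1) (2 - i + (3 - j) - 1) l (3 - l) = 0 ∨
      i + j - 1 + l - 3 = i + (j + l - 2) - 2 ∧
        2 - i + (3 - j) - 1 + (3 - l) - 3 = 2 - i + (3 - j + (3 - l) - 2) - 2) := by
  decide

theorem moment_map_identity_X_pow_mul_X_pow {i j l : ℕ} (hi : i ≤ 2) (hj : j ≤ 3)
    (hl : l ≤ 3) :
    transvectant 3 (transvectant 1 (X 0 ^ i * X 1 ^ (2 - i)) (X 0 ^ j * X 1 ^ (3 - j)))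
        (X 0 ^ l * X 1 ^ (3 - l))
      = (3 / 2 : ℂ) • transvectant 2 (X 0 ^ i * X 1 ^ (2 - i))
          (transvectant 2 (X 0 ^ j * X 1 ^ (3 - j)) (X 0 ^ l * X 1 ^ (3 - l))) := by
  obtain ⟨hcoeff, hexp⟩ := transvectantCoeff_moment_map i hi j hj l hl
  simp only [transvectant_X_pow_mul_X_pow, transvectant_smul_left, transvectant_smul_right,
    smul_smul]
  generalize transvectantCoeff 1 i (2 - i) j (3 - j) = a₁ at *
  generalize transvectantCoeff 3 (i + j - 1) (2 - i + (3 - j) - 1) l (3 - l) = a₃ at *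
  generalize transvectantCoeff 2 j (3 - j) l (3 - l) = b₂ at *
  generalize transvectantCoeff 2 i (2 - i) (j + l - 2) (3 - j + (3 - l) - 2) = c₂ at *
  have hcoeffℂ : (3 / 2 : ℂ) * (b₂ * c₂) = a₁ * a₃ := by
    have h : ((2 * (a₁ * a₃) : ℤ) : ℂ) = (3 * (b₂ * c₂) : ℤ) := congrArg _ hcoeff
    push_cast at h
    linear_combination -h / 2
  rw [hcoeffℂ]
  rcases hexp with hzero | ⟨hx, hy⟩
  · rw [← Int.cast_mul, hzero, Int.cast_zero, zero_smul, zero_smul]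
  · rw [hx, hy]

/-- The moment map identity: for every binary quadratic `h` and binary cubics `p, v`,
`⟨⟨h,p⟩₁, v⟩₃ = (3/2)·⟨h, ⟨p,v⟩₂⟩₂`. -/
theorem moment_map_identity
    (h p v : MvPolynomial (Fin 2) ℂ)
    (hh : h.IsHomogeneous 2) (hp : p.IsHomogeneous 3) (hv : v.IsHomogeneous 3) :
    transvectant 3 (transvectant 1 h p) v
      = (3 / 2 : ℂ) • transvectant 2 h (transvectant 2 p v) := by
  rw [hh.eq_sum_range_X_pow_mul_X_pow, hp.eq_sum_range_X_pow_mul_X_pow,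
    hv.eq_sum_range_X_pow_mul_X_pow]
  simp only [← transvectantBilin_apply, map_sum, map_smul, LinearMap.sum_apply,
    LinearMap.smul_apply, Finset.smul_sum, smul_smul]
  refine Finset.sum_congr rfl fun l hl => Finset.sum_congr rfl fun j hj =>
    Finset.sum_congr rfl fun i hi => ?_
  simp only [Finset.mem_range, Nat.lt_succ_iff] at hi hj hl
  simp only [transvectantBilin_apply, moment_map_identity_X_pow_mul_X_pow hi hj hl, smul_smul]
  congr 1
  ring
end

section
/- Let α, β, γ ∈ ℂ be pairwise distinct and suppose D := (α−β)^2 + (α−γ)^2 + (β−γ)^2 ≠ 0. Let p(x,y) := (x−αy)(x−βy)(x−γy) and let q(z) := ⟨p,p⟩_2(z,1) be the dehomogenized binary quadratic. Then q(w_+) = q(w_−) = 0, where w_± = [α^2(β+γ) + β^2(γ+α) + γ^2(α+β) − 6αβγ ± √3·i·(α^2(β−γ) + β^2(γ−α) + γ^2(α−β))] / D. That is, the roots of the Gergonne quadric Q(p) = ⟨p,p⟩_2 are given by this explicit formula. -/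
open MvPolynomial

/-! Expanding the transvectant, `⟨p,p⟩₂(z,1) = -4 (D z² - 2 M z + E)` with `D` as in the statement,
`M = α²(β+γ) + β²(γ+α) + γ²(α+β) - 6αβγ` and `E = 2(α²β² + α²γ² + β²γ² - αβγ(α+β+γ))`.
Its reduced discriminant `M² - D E` equals `-3 N²` with `N = α²(β-γ) + β²(γ-α) + γ²(α-β)`,
so the quadratic formula gives the roots `(M ± √-3 N) / D`. -/

theorem transvectant_two (φ ψ : MvPolynomial (Fin 2) ℂ) :
    transvectant 2 φ ψ =
      dX (dX φ) * dY (dY ψ) - 2 * (dX (dY φ) * dX (dY ψ)) + dY (dY φ) * dX (dX ψ) := by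
  simp only [transvectant, Nat.reduceAdd, smul_eq_C_mul, C_mul, C_pow, C_neg, C_1, map_natCast,
    Finset.sum_range_succ, Finset.range_one, Finset.sum_singleton, pow_zero, Nat.choose_zero_right,
    Nat.cast_one, mul_one, tsub_zero, Function.iterate_zero, id_eq, Function.iterate_succ,
    Function.comp_apply, one_mul, pow_one, Nat.choose_succ_self_right,
    Nat.cast_ofNat, neg_mul, Nat.add_one_sub_one, even_two, Even.neg_pow, one_pow, Nat.choose_self,
    tsub_self]
  ring

theorem eval_transvectant_two_cubic (α β γ z : ℂ) :
    eval ![z, 1]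
      (transvectant 2 ((X 0 - C α * X 1) * (X 0 - C β * X 1) * (X 0 - C γ * X 1))
        ((X 0 - C α * X 1) * (X 0 - C β * X 1) * (X 0 - C γ * X 1))) =
    -4 * (((α - β) ^ 2 + (α - γ) ^ 2 + (β - γ) ^ 2) * z ^ 2
      - 2 * (α ^ 2 * (β + γ) + β ^ 2 * (γ + α) + γ ^ 2 * (α + β) - 6 * α * β * γ) * z
      + 2 * (α ^ 2 * β ^ 2 + α ^ 2 * γ ^ 2 + β ^ 2 * γ ^ 2 - α * β * γ * (α + β + γ))) := by
  simp only [transvectant_two, dX, dY, Derivation.leibniz, map_sub, map_add, map_neg, map_mul,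
    map_one, pderiv_X, derivation_C, Pi.single_eq_same, Pi.single_eq_of_ne, ne_eq, one_ne_zero,
    zero_ne_one, not_false_eq_true, smul_eq_mul, mul_zero, mul_one, add_zero, sub_zero, zero_sub,
    zero_add, mul_neg, neg_neg, neg_mul, eval_X, eval_C, eval_ofNat, Fin.isValue,
    Matrix.cons_val_zero, Matrix.cons_val_one, Matrix.cons_val_fin_one]
  ring

theorem quadratic_eq_zero_of_sq_eq_discrim {K : Type*} [Field K] {D M E s : K} (hD : D ≠ 0)
    (hs : s ^ 2 = M ^ 2 - D * E) :
    D * ((M + s) / D) ^ 2 - 2 * M * ((M + s) / D) + E = 0 := by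
  field_simp
  linear_combination hs

theorem gergonne_roots_general
    (α β γ : ℂ)
    (hD : (α - β) ^ 2 + (α - γ) ^ 2 + (β - γ) ^ 2 ≠ 0)
    (i3 : ℂ) (hi3 : i3 ^ 2 = -3)
    (p : MvPolynomial (Fin 2) ℂ)
    (hpdef : p = (X 0 - C α * X 1) * (X 0 - C β * X 1) * (X 0 - C γ * X 1)) :
    MvPolynomial.eval
        ![(α ^ 2 * (β + γ) + β ^ 2 * (γ + α) + γ ^ 2 * (α + β) - 6 * α * β * γ
              + i3 * (α ^ 2 * (β - γ) + β ^ 2 * (γ - α) + γ ^ 2 * (α - β)))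
            / ((α - β) ^ 2 + (α - γ) ^ 2 + (β - γ) ^ 2), 1]
        (transvectant 2 p p) = 0 ∧
    MvPolynomial.eval
        ![(α ^ 2 * (β + γ) + β ^ 2 * (γ + α) + γ ^ 2 * (α + β) - 6 * α * β * γ
              - i3 * (α ^ 2 * (β - γ) + β ^ 2 * (γ - α) + γ ^ 2 * (α - β)))
            / ((α - β) ^ 2 + (α - γ) ^ 2 + (β - γ) ^ 2), 1]
        (transvectant 2 p p) = 0 := by
  subst hpdef
  set N := α ^ 2 * (β - γ) + β ^ 2 * (γ - α) + γ ^ 2 * (α - β)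
  have discrim (s : ℂ) (hs : s ^ 2 = -3 * N ^ 2) :
      s ^ 2 = (α ^ 2 * (β + γ) + β ^ 2 * (γ + α) + γ ^ 2 * (α + β) - 6 * α * β * γ) ^ 2
        - ((α - β) ^ 2 + (α - γ) ^ 2 + (β - γ) ^ 2)
          * (2 * (α ^ 2 * β ^ 2 + α ^ 2 * γ ^ 2 + β ^ 2 * γ ^ 2 - α * β * γ * (α + β + γ))) := by
    rw [hs]
    ring
  rw [eval_transvectant_two_cubic, eval_transvectant_two_cubic, sub_eq_add_neg _ (i3 * N)]
  constructor <;> refine mul_eq_zero_of_right _ (quadratic_eq_zero_of_sq_eq_discrim hD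
    (discrim _ ?_))
  · rw [mul_pow, hi3]
  · rw [neg_pow_two, mul_pow, hi3]

/-- Roots of the Gergonne quadric: for pairwise distinct `α, β, γ` with
`D = (α−β)² + (α−γ)² + (β−γ)² ≠ 0`, the dehomogenized quadratic `⟨p,p⟩₂(z,1)` of
`p = (x−αy)(x−βy)(x−γy)` vanishes at the two explicit points `w±`. -/
theorem gergonne_roots
    (α β γ : ℂ) (hαβ : α ≠ β) (hαγ : α ≠ γ) (hβγ : β ≠ γ)
    (hD : (α - β) ^ 2 + (α - γ) ^ 2 + (β - γ) ^ 2 ≠ 0)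
    (i3 : ℂ) (hi3 : i3 ^ 2 = -3)
    (p : MvPolynomial (Fin 2) ℂ)
    (hpdef : p = (X 0 - C α * X 1) * (X 0 - C β * X 1) * (X 0 - C γ * X 1)) :
    MvPolynomial.eval
        ![(α ^ 2 * (β + γ) + β ^ 2 * (γ + α) + γ ^ 2 * (α + β) - 6 * α * β * γ
              + i3 * (α ^ 2 * (β - γ) + β ^ 2 * (γ - α) + γ ^ 2 * (α - β)))
            / ((α - β) ^ 2 + (α - γ) ^ 2 + (β - γ) ^ 2), 1]
        (transvectant 2 p p) = 0 ∧
    MvPolynomial.eval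
        ![(α ^ 2 * (β + γ) + β ^ 2 * (γ + α) + γ ^ 2 * (α + β) - 6 * α * β * γ
              - i3 * (α ^ 2 * (β - γ) + β ^ 2 * (γ - α) + γ ^ 2 * (α - β)))
            / ((α - β) ^ 2 + (α - γ) ^ 2 + (β - γ) ^ 2), 1]
        (transvectant 2 p p) = 0 :=
  gergonne_roots_general α β γ hD i3 hi3 p hpdef
end

section
/- For all binary cubics p, q ∈ ℂ[x,y] (homogeneous of degree 3), the identity ⟨⟨p,q⟩_1, ⟨p,q⟩_1⟩_4 = 6·(⟨p,q⟩_3)^2 holds in ℂ, where ⟨p,q⟩_1 is a binary quartic and ⟨p,q⟩_3 is a constant. That is, the pairs (Ψ, G) = (⟨p,q⟩_1, ⟨p,q⟩_3) arising from lines of binary cubics satisfy the quadratic relation expressing that the invariant 𝓘 of the associated Gergonne conic vanishes. -/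
open MvPolynomial

/-! A binary form of degree `n` is determined by its `n + 1` coefficients, and the transvectants
of two forms are bilinear in their coefficients. Writing `p` and `q` in coordinates, `⟨p,q⟩₁` is an
explicit quartic, `⟨p,q⟩₃` an explicit constant, and the fourth transvectant of a quartic with
itself an explicit quadratic form in its five coefficients; the claim becomes a polynomial identity
in the eight coefficients of `p` and `q`. -/

namespace MvPolynomial

variable {R : Type*} [CommSemiring R]

noncomputable def binaryForm (n : ℕ) (a : Fin (n + 1) → R) : MvPolynomial (Fin 2) R :=
  ∑ i : Fin (n + 1), C (a i) * X 0 ^ (n - i : ℕ) * X 1 ^ (i : ℕ)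

theorem coeff_C_mul_X_zero_pow_mul_X_one_pow (c : R) (i j : ℕ) (m : Fin 2 →₀ ℕ) :
    coeff m (C c * X 0 ^ i * X 1 ^ j) =
      if Finsupp.single 0 i + Finsupp.single 1 j = m then c else 0 := by
  rw [mul_assoc, X_pow_eq_monomial, X_pow_eq_monomial, monomial_mul, C_mul_monomial, one_mul,
    mul_one, coeff_monomial]

theorem IsHomogeneous.eq_binaryForm {f : MvPolynomial (Fin 2) R} {n : ℕ}
    (hf : f.IsHomogeneous n) :
    f = binaryForm n fun i =>
      coeff (Finsupp.single (0 : Fin 2) (n - i : ℕ) + Finsupp.single 1 (i : ℕ)) f := by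
  ext m
  simp only [binaryForm, coeff_sum, coeff_C_mul_X_zero_pow_mul_X_one_pow]
  have hdeg : m.degree = m 0 + m 1 := by
    simp [Finsupp.degree_eq_sum, Fin.sum_univ_two]
  by_cases hm : m 0 + m 1 = n
  · rw [Finset.sum_eq_single ⟨m 1, by omega⟩]
    · have hm_eq : Finsupp.single 0 (n - m 1) + Finsupp.single 1 (m 1) = m := by
        ext i; fin_cases i <;> simp [← hm]
      simp only [hm_eq, if_true]
    · rintro i - hi
      rw [if_neg]
      rintro rfl
      exact hi (Fin.ext (by simp))
    · simp
  · rw [hf.coeff_eq_zero (by omega), Finset.sum_eq_zero]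
    rintro i -
    rw [if_neg]
    rintro rfl
    exact hm (by simp [Nat.sub_add_cancel (Nat.lt_succ_iff.mp i.isLt)])

theorem pderiv_zero_C_mul_X_pow_mul_X_pow (c : R) (i j : ℕ) :
    pderiv 0 (C c * X 0 ^ i * X 1 ^ j : MvPolynomial (Fin 2) R) =
      C (c * i) * X 0 ^ (i - 1) * X 1 ^ j := by
  simp [pderiv_X_of_ne (show (1 : Fin 2) ≠ 0 by decide), mul_comm, mul_left_comm, mul_assoc]

theorem pderiv_one_C_mul_X_pow_mul_X_pow (c : R) (i j : ℕ) :
    pderiv 1 (C c * X 0 ^ i * X 1 ^ j : MvPolynomial (Fin 2) R) =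
      C (c * j) * X 0 ^ i * X 1 ^ (j - 1) := by
  simp [pderiv_X_of_ne (show (0 : Fin 2) ≠ 1 by decide), mul_comm, mul_left_comm, mul_assoc]

-- Expanded with every exponent written out, so that the `pderiv` lemmas above apply termwise.
theorem binaryForm_three (a : Fin 4 → R) :
    binaryForm 3 a = C (a 0) * X 0 ^ 3 * X 1 ^ 0 + C (a 1) * X 0 ^ 2 * X 1 ^ 1
      + C (a 2) * X 0 ^ 1 * X 1 ^ 2 + C (a 3) * X 0 ^ 0 * X 1 ^ 3 := by
  rw [binaryForm, Fin.sum_univ_four]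
  rfl

theorem binaryForm_four (a : Fin 5 → R) :
    binaryForm 4 a = C (a 0) * X 0 ^ 4 * X 1 ^ 0 + C (a 1) * X 0 ^ 3 * X 1 ^ 1
      + C (a 2) * X 0 ^ 2 * X 1 ^ 2 + C (a 3) * X 0 ^ 1 * X 1 ^ 3 + C (a 4) * X 0 ^ 0 * X 1 ^ 4 := by
  rw [binaryForm, Fin.sum_univ_five]
  rfl

end MvPolynomial

theorem transvectant_one_binaryForm_three (a b : Fin 4 → ℂ) :
    transvectant 1 (binaryForm 3 a) (binaryForm 3 b) = binaryForm 4
      ![3 * (a 0 * b 1 - a 1 * b 0), 6 * (a 0 * b 2 - a 2 * b 0),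
        9 * (a 0 * b 3 - a 3 * b 0) + 3 * (a 1 * b 2 - a 2 * b 1),
        6 * (a 1 * b 3 - a 3 * b 1), 3 * (a 2 * b 3 - a 3 * b 2)] := by
  simp only [transvectant, dX, dY, binaryForm_three, binaryForm_four, Finset.sum_range_succ,
    Finset.sum_range_zero, Nat.reduceAdd, Nat.reduceSub, Function.iterate_succ,
    Function.iterate_zero, Function.comp_apply, id_eq, map_add, pderiv_zero_C_mul_X_pow_mul_X_pow,
    pderiv_one_C_mul_X_pow_mul_X_pow]
  -- `C` is split only now: iterated derivatives need the shape `C c * X 0 ^ i * X 1 ^ j`.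
  simp only [smul_eq_C_mul, map_add, map_sub, map_mul, map_pow, map_neg, map_one, map_natCast,
    map_ofNat, Matrix.cons_val, Nat.choose_succ_self_right, Nat.choose_self]
  ring

theorem transvectant_three_binaryForm_three (a b : Fin 4 → ℂ) :
    transvectant 3 (binaryForm 3 a) (binaryForm 3 b) =
      C (36 * (a 0 * b 3 - a 3 * b 0) - 12 * (a 1 * b 2 - a 2 * b 1)) := by
  simp only [transvectant, dX, dY, binaryForm_three, Finset.sum_range_succ,
    Finset.sum_range_zero, Nat.reduceAdd, Nat.reduceSub, Function.iterate_succ,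
    Function.iterate_zero, Function.comp_apply, id_eq, map_add, pderiv_zero_C_mul_X_pow_mul_X_pow,
    pderiv_one_C_mul_X_pow_mul_X_pow]
  simp only [smul_eq_C_mul, map_sub, map_mul, map_pow, map_neg, map_one, map_natCast,
    map_ofNat, Nat.choose_zero_right, Nat.choose_one_right, Nat.choose_succ_self_right,
    Nat.choose_self]
  ring

theorem transvectant_four_binaryForm_four (u v : Fin 5 → ℂ) :
    transvectant 4 (binaryForm 4 u) (binaryForm 4 v) =
      C (576 * (u 0 * v 4 + u 4 * v 0) - 144 * (u 1 * v 3 + u 3 * v 1) + 96 * u 2 * v 2) := by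
  simp only [transvectant, dX, dY, binaryForm_four, Finset.sum_range_succ,
    Finset.sum_range_zero, Nat.reduceAdd, Nat.reduceSub, Function.iterate_succ,
    Function.iterate_zero, Function.comp_apply, id_eq, map_add, pderiv_zero_C_mul_X_pow_mul_X_pow,
    pderiv_one_C_mul_X_pow_mul_X_pow]
  simp only [smul_eq_C_mul, map_add, map_sub, map_mul, map_pow, map_neg, map_one, map_natCast,
    map_ofNat, Nat.choose_zero_right, Nat.choose_one_right,
    Nat.choose_succ_self_right, Nat.choose_self, Nat.choose_two_right]
  ring

/-- For all binary cubics `p, q`, the identity `⟨⟨p,q⟩₁, ⟨p,q⟩₁⟩₄ = 6·(⟨p,q⟩₃)²` holds: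
the pairs `(Ψ, G) = (⟨p,q⟩₁, ⟨p,q⟩₃)` arising from lines of binary cubics satisfy the
quadratic relation `𝓘 = 0` of the Gergonne conic. -/
theorem gergonne_invariant_vanishes
    (p q : MvPolynomial (Fin 2) ℂ) (hp : p.IsHomogeneous 3) (hq : q.IsHomogeneous 3) :
    transvectant 4 (transvectant 1 p q) (transvectant 1 p q)
      = (6 : ℂ) • (transvectant 3 p q) ^ 2 := by
  obtain ⟨a, rfl⟩ : ∃ a, p = binaryForm 3 a := ⟨_, hp.eq_binaryForm⟩
  obtain ⟨b, rfl⟩ : ∃ b, q = binaryForm 3 b := ⟨_, hq.eq_binaryForm⟩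
  rw [transvectant_one_binaryForm_three, transvectant_four_binaryForm_four,
    transvectant_three_binaryForm_three, smul_eq_C_mul, ← map_pow, ← map_mul]
  congr 1
  simp only [Matrix.cons_val]
  ring
end

section
/- Let f : ℂ → ℂ be entire and define F : ℂ^5 → ℂ by the contour integral over the unit circle F(τ, z, y, w, σ) := ∮_{|λ|=1} f(τ + λ·z + λ^2·y − λ^3·w + λ^4·σ) dλ. Then F satisfies the six second-order linear PDEs (partial derivatives taken along the five complex coordinate directions): F_{yτ} − F_{zz} = 0, F_{τw} + F_{yz} = 0, F_{τσ} + F_{zw} = 0, F_{zw} + F_{yy} = 0, F_{σz} + F_{wy} = 0, and F_{σy} − F_{ww} = 0. -/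
/-- Partial derivative of a function on `ℂ⁵` along the `i`-th coordinate direction. -/
noncomputable def pdC (i : Fin 5) (F : (Fin 5 → ℂ) → ℂ) : (Fin 5 → ℂ) → ℂ :=
  fun v => deriv (fun t : ℂ => F (Function.update v i t)) (v i)

/-- The contour-integral (Penrose–Radon / generalised Legendre) transform
`F(τ, z, y, w, σ) = ∮_{|λ|=1} f(τ + λz + λ²y − λ³w + λ⁴σ) dλ`
with coordinates `(τ, z, y, w, σ) = (v 0, v 1, v 2, v 3, v 4)`. -/
noncomputable def radonF (f : ℂ → ℂ) : (Fin 5 → ℂ) → ℂ :=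
  fun v =>
    circleIntegral
      (fun l => f (v 0 + l * v 1 + l ^ 2 * v 2 - l ^ 3 * v 3 + l ^ 4 * v 4)) 0 1

/-!
Writing `ω(λ, v) = ∑ᵢ cᵢ(λ) vᵢ` with `c = (1, λ, λ², -λ³, λ⁴)`, differentiation under the
integral sign gives `∂ᵢ∂ⱼ F(v) = ∮ cᵢ(λ) cⱼ(λ) f''(ω(λ, v)) dλ`. Since `cᵢ cⱼ = ±λ^(i+j)`, with one
sign change for each index equal to `3`, the two terms of each equation have integrands that agree
or are opposite pointwise.
-/

open Metric

theorem hasDerivAt_circleIntegral_of_continuous_deriv {E : Type*} [NormedAddCommGroup E]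
    [NormedSpace ℂ E] {G G' : ℂ → ℂ → E} {c : ℂ} {R : ℝ}
    (hG : ∀ t l, HasDerivAt (G · l) (G' t l) t) (hGc : ∀ t, Continuous (G t))
    (hG'c : Continuous fun p : ℂ × ℂ => G' p.1 p.2) (t₀ : ℂ) :
    HasDerivAt (fun t => ∮ l in C(c, R), G t l) (∮ l in C(c, R), G' t₀ l) t₀ := by
  have hdc : Continuous (deriv (circleMap c R)) := by
    rw [funext (deriv_circleMap c R)]; fun_prop
  have hF' : Continuous fun p : ℂ × ℝ => deriv (circleMap c R) p.2 • G' p.1 (circleMap c R p.2) :=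
    (hdc.comp continuous_snd).smul
      (hG'c.comp (continuous_fst.prodMk ((continuous_circleMap c R).comp continuous_snd)))
  obtain ⟨C, hC⟩ := ((isCompact_closedBall t₀ 1).prod isCompact_uIcc).exists_bound_of_continuousOn
    (hF'.continuousOn (s := closedBall t₀ 1 ×ˢ Set.uIcc 0 (2 * Real.pi)))
  simp only [circleIntegral]
  refine (intervalIntegral.hasDerivAt_integral_of_dominated_loc_of_deriv_le
    (μ := MeasureTheory.volume)
    (F := fun t θ => deriv (circleMap c R) θ • G t (circleMap c R θ))
    (F' := fun t θ => deriv (circleMap c R) θ • G' t (circleMap c R θ)) (bound := fun _ => C)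
    (ball_mem_nhds t₀ one_pos) ?_ ?_ ?_ ?_ intervalIntegrable_const ?_).2
  · exact .of_forall fun t =>
      (hdc.smul ((hGc t).comp (continuous_circleMap c R))).aestronglyMeasurable
  · exact (hdc.smul ((hGc t₀).comp (continuous_circleMap c R))).intervalIntegrable _ _
  · exact (hF'.comp (continuous_const.prodMk continuous_id)).aestronglyMeasurable
  · exact .of_forall fun θ hθ t ht =>
      hC (t, θ) ⟨ball_subset_closedBall ht, Set.uIoc_subset_uIcc hθ⟩
  · exact .of_forall fun θ _ t _ => (hG t _).const_smul _

/-- The section `ω` of `O(4)` in the affine coordinate `λ = t / s`. -/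
def quarticSection (v : Fin 5 → ℂ) (l : ℂ) : ℂ :=
  v 0 + l * v 1 + l ^ 2 * v 2 - l ^ 3 * v 3 + l ^ 4 * v 4

def quarticSectionCoeff : Fin 5 → ℂ → ℂ :=
  ![fun _ => 1, fun l => l, fun l => l ^ 2, fun l => -l ^ 3, fun l => l ^ 4]

theorem continuous_quarticSectionCoeff (i : Fin 5) : Continuous (quarticSectionCoeff i) := by
  fin_cases i <;> simp [quarticSectionCoeff] <;> fun_prop

theorem quarticSection_update (v : Fin 5 → ℂ) (i : Fin 5) (t l : ℂ) :
    quarticSection (Function.update v i t) l =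
      quarticSection v l + quarticSectionCoeff i l * (t - v i) := by
  fin_cases i <;> simp [quarticSection, quarticSectionCoeff, Function.update] <;> ring

theorem pdC_circleIntegral_comp_quarticSection {q g : ℂ → ℂ} (hq : Continuous q)
    (hg : Differentiable ℂ g) (c : ℂ) (R : ℝ) (i : Fin 5) (v : Fin 5 → ℂ) :
    pdC i (fun v => ∮ l in C(c, R), q l * g (quarticSection v l)) v =
      ∮ l in C(c, R), q l * (quarticSectionCoeff i l * deriv g (quarticSection v l)) := by
  have hv : Continuous (quarticSection v) := by unfold quarticSection; fun_prop
  have hqi := continuous_quarticSectionCoeff i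
  have hgc := hg.continuous
  have hg'c := hg.deriv.continuous
  have hG : ∀ t l,
      HasDerivAt (fun t => q l * g (quarticSection v l + quarticSectionCoeff i l * (t - v i)))
        (q l * (quarticSectionCoeff i l *
          deriv g (quarticSection v l + quarticSectionCoeff i l * (t - v i)))) t := by
    intro t l
    have hlin : HasDerivAt (fun t => quarticSection v l + quarticSectionCoeff i l * (t - v i))
        (quarticSectionCoeff i l) t := by
      simpa using ((hasDerivAt_id t).sub_const (v i)).const_mul (quarticSectionCoeff i l)
        |>.const_add (quarticSection v l)
    simpa [mul_comm] using ((hg _).hasDerivAt.comp t hlin).const_mul (q l)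
  have key := hasDerivAt_circleIntegral_of_continuous_deriv (c := c) (R := R) hG
    (fun t => by fun_prop) (by fun_prop) (v i)
  simp only [pdC, quarticSection_update]
  simpa using key.deriv

theorem pdC_pdC_radonF {f : ℂ → ℂ} (hf : Differentiable ℂ f) (i j : Fin 5) (v : Fin 5 → ℂ) :
    pdC j (pdC i (radonF f)) v = ∮ l in C(0, 1), quarticSectionCoeff i l *
      (quarticSectionCoeff j l * deriv (deriv f) (quarticSection v l)) := by
  have hF : pdC i (radonF f) = fun v =>
      ∮ l in C(0, 1), quarticSectionCoeff i l * deriv f (quarticSection v l) := by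
    ext v
    have h := pdC_circleIntegral_comp_quarticSection (q := fun _ => 1) continuous_const hf 0 1 i v
    simp only [one_mul] at h
    exact h
  rw [hF]
  exact pdC_circleIntegral_comp_quarticSection (continuous_quarticSectionCoeff i) hf.deriv 0 1 j v

/-- For entire `f`, the contour integral `F` satisfies the six second-order PDEs
`F_{yτ} − F_{zz} = 0`, `F_{τw} + F_{yz} = 0`, `F_{τσ} + F_{zw} = 0`,
`F_{zw} + F_{yy} = 0`, `F_{σz} + F_{wy} = 0`, `F_{σy} − F_{ww} = 0`. -/
theorem radon_transform_pdes (f : ℂ → ℂ) (hf : Differentiable ℂ f) :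
    ∀ v : Fin 5 → ℂ,
      pdC 2 (pdC 0 (radonF f)) v - pdC 1 (pdC 1 (radonF f)) v = 0 ∧
      pdC 0 (pdC 3 (radonF f)) v + pdC 2 (pdC 1 (radonF f)) v = 0 ∧
      pdC 0 (pdC 4 (radonF f)) v + pdC 1 (pdC 3 (radonF f)) v = 0 ∧
      pdC 1 (pdC 3 (radonF f)) v + pdC 2 (pdC 2 (radonF f)) v = 0 ∧
      pdC 4 (pdC 1 (radonF f)) v + pdC 3 (pdC 2 (radonF f)) v = 0 ∧
      pdC 4 (pdC 2 (radonF f)) v - pdC 3 (pdC 3 (radonF f)) v = 0 := by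
  intro v
  simp only [pdC_pdC_radonF hf]
  refine ⟨?_, ?_, ?_, ?_, ?_, ?_⟩ <;>
    first
    | rw [sub_eq_zero]
    | rw [add_eq_zero_iff_eq_neg, ← neg_one_mul, ← circleIntegral.integral_const_mul]
  all_goals
    congr 1; ext l
    simp only [quarticSectionCoeff, Matrix.cons_val, Matrix.cons_val_zero, Matrix.cons_val_one]
    ring
end
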